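/- arXiv:1703.03698 — 7 statements merged into one kernel-verified Lean document; each statement's English description precedes it below -/
import Mathlib

section
/- Let R be a discrete valuation ring with uniformizer π, K its fraction field, and A a flat R-algebra (i.e. A has no π-torsion). If A has reduced special fiber, i.e. A/πA is a reduced ring, then A is integrally closed in A ⊗_R K in the following sense: any element α ∈ A ⊗_R K that satisfies a monic polynomial equation αᵐ + a_{m-1}α^{m-1} + ... + a₀ = 0 with all a_i ∈ A already lies in (the image of) A. -/
/-!
Write `α = c / p^(n+1)` with `p = π`. Clearing denominators in a monic equation for
`β = c / p = p^n α` shows `p ∣ c^d`; since `A/pA` is reduced, `p ∣ c`, so `α = c' / p^n`.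
Induction on `n` ends with `α ∈ A`. Flatness makes `A → A[1/p]` injective, which is what lets
an equation in `A[1/p]` be read in `A`.
-/

open Polynomial

theorem Polynomial.Monic.dvd_pow_natDegree_of_eval_scaleRoots_eq_zero {A : Type*} [CommRing A]
    {P : A[X]} (hP : P.Monic) {s c : A} (hc : (P.scaleRoots s).eval c = 0) :
    s ∣ c ^ P.natDegree := by
  have hlower : s ∣ ∑ i ∈ Finset.range P.natDegree, (P.scaleRoots s).coeff i * c ^ i := by
    refine Finset.dvd_sum fun i hi => ?_
    rw [coeff_scaleRoots]
    exact ((dvd_pow_self s (Nat.sub_ne_zero_of_lt (Finset.mem_range.mp hi))).mul_left _).mul_right _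
  have hsplit : (P.scaleRoots s).eval c =
      ∑ i ∈ Finset.range P.natDegree, (P.scaleRoots s).coeff i * c ^ i + c ^ P.natDegree := by
    rw [eval_eq_sum_range, natDegree_scaleRoots, Finset.sum_range_succ,
      coeff_scaleRoots_natDegree, hP.leadingCoeff, one_mul]
  rw [hc] at hsplit
  exact (dvd_add_right hlower).mp (hsplit ▸ dvd_zero s)

theorem dvd_pow_of_isIntegral_of_algebraMap_mul_eq {A L : Type*} [CommRing A] [CommRing L]
    [Algebra A L] (hinj : Function.Injective (algebraMap A L)) {β : L} (hβ : IsIntegral A β)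
    {s c : A} (h : algebraMap A L s * β = algebraMap A L c) : ∃ n, s ∣ c ^ n := by
  obtain ⟨P, hP, hPβ⟩ := hβ
  refine ⟨P.natDegree, hP.dvd_pow_natDegree_of_eval_scaleRoots_eq_zero (hinj ?_)⟩
  rw [← aeval_algebraMap_apply_eq_algebraMap_eval, ← h, map_zero]
  exact scaleRoots_aeval_eq_zero hPβ

theorem IsLocalization.Away.isIntegrallyClosedIn_of_isRadical {A L : Type*} [CommRing A]
    [CommRing L] [Algebra A L] {p : A} [IsLocalization.Away p L] (hp : p ∈ nonZeroDivisors A)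
    (hrad : (Ideal.span {p}).IsRadical) : IsIntegrallyClosedIn A L := by
  have hinj : Function.Injective (algebraMap A L) :=
    IsLocalization.injective L (Submonoid.powers_le.mpr hp)
  refine isIntegrallyClosedIn_iff.mpr ⟨hinj, fun {α} hα => ?_⟩
  obtain ⟨n, a, ha⟩ := IsLocalization.Away.surj p α
  induction n generalizing a with
  | zero => exact ⟨a, by simpa using ha.symm⟩
  | succ n ih =>
    have hβ : algebraMap A L p * (α * algebraMap A L p ^ n) = algebraMap A L a := by
      rw [← ha]; ring
    obtain ⟨k, hk⟩ := dvd_pow_of_isIntegral_of_algebraMap_mul_eq hinj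
      (hα.mul (isIntegral_algebraMap.pow n)) hβ
    obtain ⟨b, rfl⟩ : p ∣ a :=
      Ideal.mem_span_singleton.mp (hrad ⟨k, Ideal.mem_span_singleton.mpr hk⟩)
    rw [map_mul] at hβ
    exact ih b ((IsLocalization.Away.algebraMap_isUnit p).mul_left_cancel hβ)

theorem integrally_closed_of_reduced_special_fiber_general
    (R A : Type*) [CommRing R]
    [CommRing A] [Algebra R A]
    (π : R)
    (hflat : ∀ x : A, algebraMap R A π * x = 0 → x = 0)
    (hred : IsReduced (A ⧸ Ideal.span {algebraMap R A π}))
    (α : Localization.Away (algebraMap R A π)) (hint : IsIntegral A α) :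
    ∃ a : A, algebraMap A (Localization.Away (algebraMap R A π)) a = α := by
  have : IsIntegrallyClosedIn A (Localization.Away (algebraMap R A π)) :=
    IsLocalization.Away.isIntegrallyClosedIn_of_isRadical (mem_nonZeroDivisors_iff_left.mpr hflat)
      ((Ideal.isRadical_iff_quotient_reduced _).mpr hred)
  exact IsIntegrallyClosedIn.isIntegral_iff.mp hint

/-- let `R` be a discrete valuation ring with uniformizer `π` and `A` a
π-torsion-free `R`-algebra whose special fiber `A/πA` is reduced, in which every nonzero element
can be written as `π^n · a` with `a ∉ πA`.  Then `A` is integrally closed in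
`A ⊗_R K = A[π⁻¹]`: every element of the localization that is integral over `A` comes from `A`. -/
theorem integrally_closed_of_reduced_special_fiber
    (R A : Type*) [CommRing R] [IsDomain R] [IsDiscreteValuationRing R]
    [CommRing A] [Algebra R A]
    (π : R) (hπ : Irreducible π)
    (hflat : ∀ x : A, algebraMap R A π * x = 0 → x = 0)
    (hrep : ∀ x : A, x ≠ 0 →
      ∃ (a : A) (n : ℕ), (¬ ∃ b : A, a = algebraMap R A π * b) ∧
        x = algebraMap R A π ^ n * a)
    (hred : IsReduced (A ⧸ Ideal.span {algebraMap R A π}))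
    (α : Localization.Away (algebraMap R A π)) (hint : IsIntegral A α) :
    ∃ a : A, algebraMap A (Localization.Away (algebraMap R A π)) a = α :=
  integrally_closed_of_reduced_special_fiber_general R A π hflat hred α hint
end

section
/- Let R be a complete discrete valuation ring with uniformizer π, let e be a positive integer, and let A = R{X,Y}/(XY − π^e) be the algebra of bounded functions on a closed annulus (elements f = Σ_{i≥0} a_i X^i + Σ_{i>0} b_i Y^i with a_i, b_i ∈ R tending to 0). Suppose f ∈ A satisfies f(1) := Σ_{i≥0} a_i + Σ_{i>0} b_i π^{ei} = 0. Then there exists g ∈ A such that Y·f = (Y − π^e)·g. Explicitly, g = Σ_{i≥0} c_i X^i + Σ_{i>0} d_i Y^i with c_i = −Σ_{k≥i+1} a_k and d_i = Σ_{k≥i} b_k π^{e(k−i)}. -/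
/-!
Modulo `XY = π^e` it suffices to write `Y f - (Y - π^e) g = (XY - π^e) h`, and
`h = Σ_i (Σ_{k>i} a_k) X^i` works. Comparing coefficients of `X^i Y^j`, each case is either
trivial, one of the tail recursions `c_{i-1} = c_i - a_i`, `d_j = b_j + π^e d_{j+1}`, or, for the
coefficient of `Y`, the identity `a_0 - c_0 + π^e d_1 = f(1) = 0`.
-/

noncomputable section

open MvPowerSeries

namespace AnnulusDivision

section TailSums

variable {G : Type*} [AddCommGroup G] [TopologicalSpace G] [IsTopologicalAddGroup G] [T2Space G]

def tailSum (a : ℕ → G) (i : ℕ) : G := ∑' k, a (k + i + 1)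

theorem tsum_eq_add_tailSum {a : ℕ → G} (ha : Summable a) : ∑' k, a k = a 0 + tailSum a 0 :=
  ha.tsum_eq_zero_add

theorem tailSum_eq_add_tailSum_succ {a : ℕ → G} (ha : Summable a) (i : ℕ) :
    tailSum a i = a (i + 1) + tailSum a (i + 1) := by
  have := ((summable_nat_add_iff (i + 1)).2 ha).tsum_eq_zero_add
  simp only [zero_add, add_assoc, add_comm 1] at this
  simpa only [tailSum, add_assoc] using this

end TailSums

section WeightedTails

variable {R : Type*} [CommRing R] [TopologicalSpace R] [IsTopologicalRing R] [T2Space R]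

def weightedTail (q : R) (b : ℕ → R) (j : ℕ) : R := ∑' k, b (k + j) * q ^ k

theorem weightedTail_eq_add_mul {q : R} {b : ℕ → R}
    (hb : ∀ j, Summable fun k => b (k + j) * q ^ k) (j : ℕ) :
    weightedTail q b j = b j + q * weightedTail q b (j + 1) := by
  rw [weightedTail, (hb j).tsum_eq_zero_add, weightedTail, ← (hb (j + 1)).tsum_mul_left]
  simp only [zero_add, pow_zero, mul_one, pow_succ]
  congr 1
  refine tsum_congr fun k => ?_
  rw [add_right_comm, add_assoc]
  ring

theorem add_tailSum_add_mul_weightedTail_eq_zero {q : R} {a b : ℕ → R} (hb0 : b 0 = 0)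
    (ha : Summable a) (hb : ∀ j, Summable fun k => b (k + j) * q ^ k)
    (hab : HasSum (fun i => a i + b i * q ^ i) 0) :
    a 0 + tailSum a 0 + q * weightedTail q b 1 = 0 := by
  have hb' : Summable fun k => b k * q ^ k := by simpa using hb 0
  have hsplit : ∑' i, (a i + b i * q ^ i) = a 0 + tailSum a 0 + weightedTail q b 0 := by
    rw [ha.tsum_add hb', tsum_eq_add_tailSum ha]
    simp only [weightedTail, add_zero]
  have hd0 : weightedTail q b 0 = q * weightedTail q b 1 := by
    simpa [hb0] using weightedTail_eq_add_mul hb 0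
  rw [← hd0, ← hsplit, hab.tsum_eq]

end WeightedTails

section Coefficients

variable {σ R : Type*} [CommSemiring R]

theorem coeff_add_single_X_mul (s : σ) (n : σ →₀ ℕ) (φ : MvPowerSeries σ R) :
    coeff (n + Finsupp.single s 1) (X s * φ) = coeff n φ := by
  rw [X_def, add_comm, coeff_add_monomial_mul, one_mul]

theorem coeff_X_mul_of_eq_zero {s : σ} {n : σ →₀ ℕ} (hn : n s = 0) (φ : MvPowerSeries σ R) :
    coeff n (X s * φ) = 0 := by
  rw [X_def, coeff_monomial_mul, if_neg]
  simp [Finsupp.single_le_iff, hn]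

def bideg (i j : ℕ) : Fin 2 →₀ ℕ := Finsupp.single 0 i + Finsupp.single 1 j

@[simp] theorem bideg_zero (i j : ℕ) : bideg i j 0 = i := by simp [bideg]

@[simp] theorem bideg_one (i j : ℕ) : bideg i j 1 = j := by simp [bideg]

theorem eq_bideg (s : Fin 2 →₀ ℕ) : s = bideg (s 0) (s 1) := by
  ext k; fin_cases k <;> simp

theorem coeff_bideg_succ_X_zero_mul (i j : ℕ) (φ : MvPowerSeries (Fin 2) R) :
    coeff (bideg (i + 1) j) (X 0 * φ) = coeff (bideg i j) φ := by
  have : bideg (i + 1) j = bideg i j + Finsupp.single 0 1 := by ext k; fin_cases k <;> simp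
  rw [this, coeff_add_single_X_mul]

theorem coeff_bideg_succ_X_one_mul (i j : ℕ) (φ : MvPowerSeries (Fin 2) R) :
    coeff (bideg i (j + 1)) (X 1 * φ) = coeff (bideg i j) φ := by
  have : bideg i (j + 1) = bideg i j + Finsupp.single 1 1 := by ext k; fin_cases k <;> simp
  rw [this, coeff_add_single_X_mul]

/-- `Σ_i a_i X^i + Σ_{j>0} b_j Y^j`; the value `b 0` is ignored. -/
def annulusSeries (a b : ℕ → R) : MvPowerSeries (Fin 2) R :=
  fun s => if s 1 = 0 then a (s 0) else if s 0 = 0 then b (s 1) else 0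

@[simp] theorem coeff_bideg_annulusSeries (a b : ℕ → R) (i j : ℕ) :
    coeff (bideg i j) (annulusSeries a b) =
      if j = 0 then a i else if i = 0 then b j else 0 := by
  change annulusSeries a b (bideg i j) = _
  simp [annulusSeries]

end Coefficients

variable {R : Type*} [CommRing R] [TopologicalSpace R] [IsTopologicalRing R] [T2Space R]

theorem X_one_mul_annulusSeries_sub {q : R} {a b : ℕ → R} (hb0 : b 0 = 0)
    (ha : Summable a) (hb : ∀ j, Summable fun k => b (k + j) * q ^ k)
    (hab : HasSum (fun i => a i + b i * q ^ i) 0) :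
    X 1 * annulusSeries a b - (X 1 - C q) * annulusSeries (-tailSum a) (weightedTail q b) =
      (X 0 * X 1 - C q) * annulusSeries (tailSum a) 0 := by
  ext s
  rw [eq_bideg s]
  generalize s 0 = i, s 1 = j
  simp only [sub_mul, mul_assoc, map_sub, coeff_C_mul]
  rcases j with _ | _ | j <;> rcases i with _ | i <;>
    simp only [bideg_zero, bideg_one, coeff_bideg_annulusSeries, coeff_X_mul_of_eq_zero,
      coeff_bideg_succ_X_zero_mul, coeff_bideg_succ_X_one_mul, ↓reduceIte, Pi.neg_apply,
      Pi.zero_apply, Nat.add_eq_zero_iff, one_ne_zero, and_false, and_self, ite_self, mul_neg,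
      mul_zero, sub_neg_eq_add, zero_add, zero_sub, sub_zero, sub_self]
  · linear_combination add_tailSum_add_mul_weightedTail_eq_zero hb0 ha hb hab
  · exact (tailSum_eq_add_tailSum_succ ha i).symm
  · linear_combination -weightedTail_eq_add_mul hb (j + 1)

end AnnulusDivision

open AnnulusDivision

theorem weierstrass_division_step_general
    (R : Type*) [CommRing R]
    [TopologicalSpace R] [IsTopologicalRing R] [T2Space R]
    (π : R) (e : ℕ)
    (a b : ℕ → R) (hb0 : b 0 = 0)
    -- the tails of the relevant series are summable
    (hSa : ∀ i : ℕ, Summable fun k : ℕ => a (k + i))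
    (hSb : ∀ i : ℕ, Summable fun k : ℕ => b (k + i) * π ^ (e * k))
    -- the hypothesis `f(1) = Σ_{i≥0} a_i + Σ_{i>0} b_i π^{e i} = 0`
    (hf1 : HasSum (fun i : ℕ => a i + b i * π ^ (e * i)) 0)
    -- `f = Σ a_i X^i + Σ b_i Y^i` and `g = Σ c_i X^i + Σ d_i Y^i`
    (f g : MvPowerSeries (Fin 2) R)
    (hf : ∀ s : Fin 2 →₀ ℕ, MvPowerSeries.coeff s f =
      if s 1 = 0 then a (s 0) else if s 0 = 0 then b (s 1) else 0)
    (hg : ∀ s : Fin 2 →₀ ℕ, MvPowerSeries.coeff s g =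
      if s 1 = 0 then -∑' k : ℕ, a (k + s 0 + 1)
      else if s 0 = 0 then ∑' k : ℕ, b (k + s 1) * π ^ (e * k) else 0) :
    (Ideal.Quotient.mk (Ideal.span {(MvPowerSeries.X 0 : MvPowerSeries (Fin 2) R) *
        MvPowerSeries.X 1 - MvPowerSeries.C (σ := Fin 2) (R := R) (π ^ e)}))
      ((MvPowerSeries.X 1) * f) =
    (Ideal.Quotient.mk (Ideal.span {(MvPowerSeries.X 0 : MvPowerSeries (Fin 2) R) *
        MvPowerSeries.X 1 - MvPowerSeries.C (σ := Fin 2) (R := R) (π ^ e)}))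
      ((MvPowerSeries.X 1 - MvPowerSeries.C (σ := Fin 2) (R := R) (π ^ e)) * g) := by
  have hf' : f = annulusSeries a b := ext hf
  have hg' : g = annulusSeries (-tailSum a) (weightedTail (π ^ e) b) := by
    ext s
    rw [hg]
    simp only [pow_mul]
    rfl
  simp only [pow_mul] at hSb hf1
  rw [Ideal.Quotient.eq, Ideal.mem_span_singleton, hf', hg']
  exact ⟨_, X_one_mul_annulusSeries_sub hb0 (by simpa using hSa 0) hSb hf1⟩

/-- Weierstrass division step on a closed annulus.  Let `R` be a complete discrete
valuation ring with uniformizer `π`, and `f = Σ_{i≥0} a_i X^i + Σ_{i>0} b_i Y^i` a bounded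
function on the closed annulus of modulus `e` (coefficients tending to `0` π-adically), with
`f(1) = Σ_{i≥0} a_i + Σ_{i>0} b_i π^{ei} = 0`.  Then `Y·f = (Y − π^e)·g` in
`A = R{X,Y}/(XY − π^e)`, where `g = Σ_{i≥0} c_i X^i + Σ_{i>0} d_i Y^i` with
`c_i = −Σ_{k≥i+1} a_k` and `d_i = Σ_{k≥i} b_k π^{e(k−i)}`. -/
theorem weierstrass_division_step
    (R : Type*) [CommRing R] [IsDomain R] [IsDiscreteValuationRing R]
    [TopologicalSpace R] [IsTopologicalRing R] [T2Space R]
    (π : R) (hπ : Irreducible π) (e : ℕ) (he : 0 < e)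
    (a b : ℕ → R) (hb0 : b 0 = 0)
    -- the coefficients tend to zero π-adically (restricted power series condition)
    (hta : ∀ n : ℕ, {i : ℕ | ¬ π ^ n ∣ a i}.Finite)
    (htb : ∀ n : ℕ, {i : ℕ | ¬ π ^ n ∣ b i}.Finite)
    -- the tails of the relevant series are summable
    (hSa : ∀ i : ℕ, Summable fun k : ℕ => a (k + i))
    (hSb : ∀ i : ℕ, Summable fun k : ℕ => b (k + i) * π ^ (e * k))
    -- the hypothesis `f(1) = Σ_{i≥0} a_i + Σ_{i>0} b_i π^{e i} = 0`
    (hf1 : HasSum (fun i : ℕ => a i + b i * π ^ (e * i)) 0)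
    -- `f = Σ a_i X^i + Σ b_i Y^i` and `g = Σ c_i X^i + Σ d_i Y^i`
    (f g : MvPowerSeries (Fin 2) R)
    (hf : ∀ s : Fin 2 →₀ ℕ, MvPowerSeries.coeff s f =
      if s 1 = 0 then a (s 0) else if s 0 = 0 then b (s 1) else 0)
    (hg : ∀ s : Fin 2 →₀ ℕ, MvPowerSeries.coeff s g =
      if s 1 = 0 then -∑' k : ℕ, a (k + s 0 + 1)
      else if s 0 = 0 then ∑' k : ℕ, b (k + s 1) * π ^ (e * k) else 0) :
    (Ideal.Quotient.mk (Ideal.span {(MvPowerSeries.X 0 : MvPowerSeries (Fin 2) R) *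
        MvPowerSeries.X 1 - MvPowerSeries.C (σ := Fin 2) (R := R) (π ^ e)}))
      ((MvPowerSeries.X 1) * f) =
    (Ideal.Quotient.mk (Ideal.span {(MvPowerSeries.X 0 : MvPowerSeries (Fin 2) R) *
        MvPowerSeries.X 1 - MvPowerSeries.C (σ := Fin 2) (R := R) (π ^ e)}))
      ((MvPowerSeries.X 1 - MvPowerSeries.C (σ := Fin 2) (R := R) (π ^ e)) * g) :=
  weierstrass_division_step_general R π e a b hb0 hSa hSb hf1 f g hf hg
end
end

section
/- Let R be a complete discrete valuation ring with uniformizer π and e a positive integer. Let A = R{X,Y}/(XY − π^e). For f = Σ_{i∈ℤ} a_i X^i ∈ A (written as a Laurent series in X), define η_X(f) = min_i ord_π(a_i), v_X(f) = min{ i : ord_π(a_i) = η_X(f) }, and ν_X(f) = max{ i : ord_π(a_i) = η_X(f) }. If ν_X(f) = v_X(f) = n and η_X(f) = 0, then f = a_n X^n u with u a unit in the subring of A consisting of power series in X convergent on the region |X| = 1, i.e. f has no zero x with |X(x)| = 1. -/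
/-!
Every term `a_i x^i` with `i ≠ n` has norm at most `‖π‖ < 1`, while `a_n x^n` has norm `1`;
in an ultrametric field the dominant term then determines the norm of the whole sum.
-/

theorem HasSum.norm_eq_of_forall_ne_norm_le {ι M : Type*} [NormedAddCommGroup M]
    [IsUltrametricDist M] {g : ι → M} {S : M} (hS : HasSum g S) {n : ι} {r : ℝ}
    (hr₀ : 0 ≤ r) (hr : r < ‖g n‖) (hle : ∀ i, i ≠ n → ‖g i‖ ≤ r) : ‖S‖ = ‖g n‖ := by
  classical
  have hrest : ‖S - g n‖ ≤ r := by
    have hupdate := hS.update n 0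
    rw [zero_sub, neg_add_eq_sub] at hupdate
    rw [← hupdate.tsum_eq]
    refine IsUltrametricDist.norm_tsum_le_of_forall_le_of_nonneg hr₀ fun i => ?_
    rcases eq_or_ne i n with rfl | hi
    · simpa using hr₀
    · simpa [Function.update_of_ne hi] using hle i hi
  calc ‖S‖ = ‖g n + (S - g n)‖ := by rw [add_sub_cancel]
    _ = max ‖g n‖ ‖S - g n‖ :=
      IsUltrametricDist.norm_add_eq_max_of_norm_ne_norm (by linarith)
    _ = ‖g n‖ := max_eq_left (by linarith)

theorem RingHom.norm_map_le_norm_map_of_dvd {R L : Type*} [Semiring R] [SeminormedRing L]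
    (φ : R →+* L) (hφ : ∀ r, ‖φ r‖ ≤ 1) {p r : R} (h : p ∣ r) : ‖φ r‖ ≤ ‖φ p‖ := by
  obtain ⟨c, rfl⟩ := h
  calc ‖φ (p * c)‖ ≤ ‖φ p‖ * ‖φ c‖ := by rw [map_mul]; exact norm_mul_le _ _
    _ ≤ ‖φ p‖ * 1 := by gcongr; exact hφ c
    _ = ‖φ p‖ := mul_one _

theorem no_zero_on_unit_circle_general
    (R : Type*) [CommRing R]
    (π : R)
    (n : ℤ) (a : ℤ → R)
    -- `η_X(f) = 0` with unique dominant index `n`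
    (hother : ∀ i : ℤ, i ≠ n → π ∣ a i)
    -- a complete ultrametric valued extension field
    (L : Type*) [NormedField L] [IsUltrametricDist L]
    (φ : R →+* L)
    (hφ : ∀ r : R, ‖φ r‖ ≤ 1) (hφπ : ‖φ π‖ < 1)
    (hφan : ‖φ (a n)‖ = 1) :
    ∀ x : L, ‖x‖ = 1 → ∀ S : L, HasSum (fun i : ℤ => φ (a i) * x ^ i) S → S ≠ 0 := by
  intro x hx S hS
  have hx_zpow (i : ℤ) : ‖x ^ i‖ = 1 := by rw [norm_zpow, hx, one_zpow]
  have hnorm_n : ‖φ (a n) * x ^ n‖ = 1 := by rw [norm_mul, hx_zpow, hφan, mul_one]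
  have hnorm_S : ‖S‖ = 1 := by
    rw [hS.norm_eq_of_forall_ne_norm_le (norm_nonneg (φ π)) (hnorm_n ▸ hφπ) fun i hi => by
      rw [norm_mul, hx_zpow, mul_one]
      exact φ.norm_map_le_norm_map_of_dvd hφ (hother i hi), hnorm_n]
  rintro rfl
  simp at hnorm_S

/-- let `f = Σ_{i∈ℤ} a_i X^i` be a bounded function on the closed annulus
`|π|^e ≤ |X| ≤ 1` over a complete discrete valuation ring `R`, with `η_X(f) = 0` and
`v_X(f) = ν_X(f) = n`, i.e. `a_n` is a unit of `R` and `π ∣ a_i` for all `i ≠ n`.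
Then `f` has no zero `x` with `|x| = 1`: for every valued field extension `L` and every
`x ∈ L` with `‖x‖ = 1`, the sum `Σ a_i x^i` is nonzero. -/
theorem no_zero_on_unit_circle
    (R : Type*) [CommRing R] [IsDomain R] [IsDiscreteValuationRing R]
    (π : R) (hπ : Irreducible π) [IsAdicComplete (Ideal.span {π}) R]
    (e : ℕ) (he : 0 < e) (n : ℤ) (a : ℤ → R)
    -- Laurent series condition: `ord_π(a_{-i}) ≥ e·i`
    (hadm : ∀ i : ℕ, π ^ (e * i) ∣ a (-(i : ℤ)))
    -- `η_X(f) = 0` with unique dominant index `n`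
    (han : ¬ π ∣ a n) (hother : ∀ i : ℤ, i ≠ n → π ∣ a i)
    -- a complete ultrametric valued extension field
    (L : Type*) [NormedField L] [CompleteSpace L] [IsUltrametricDist L]
    (φ : R →+* L)
    (hφ : ∀ r : R, ‖φ r‖ ≤ 1) (hφπ : ‖φ π‖ < 1) (hφπ0 : φ π ≠ 0)
    (hφan : ‖φ (a n)‖ = 1) :
    ∀ x : L, ‖x‖ = 1 → ∀ S : L, HasSum (fun i : ℤ => φ (a i) * x ^ i) S → S ≠ 0 :=
  no_zero_on_unit_circle_general R π n a hother L φ hφ hφπ hφan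
end

section
/- Successive approximation lemma: let R be a complete discrete valuation ring with uniformizer π, A a π-adically complete flat R-algebra, and σ an order-2 continuous automorphism of A with σ(π) = ±π. Let U ∈ A satisfy σ(πU) = πU, and suppose that every σ-invariant element h ∈ π^{n+1}A can be written h ≡ b + f + σ(f) mod π^{n+2} with b ∈ π^{n+1}R, σ(b) = b, f ∈ π^{n+1}A. Then there exist a unit η ∈ A^× and a unit v ∈ R^× with σ(v) = v such that η·σ(η) = v·(1 + πU). -/
/-!
Starting from `(η₀, v₀) = (1, 1)`, which solves `η σ(η) = v (1 + πU)` modulo `π`, one improves an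
approximate solution modulo `π^{n+1}` to one modulo `π^{n+2}`: the error `h = v (1 + πU) - η σ(η)`
is `σ`-invariant and divisible by `π^{n+1}`, so the splitting hypothesis writes it as
`b + f + σ(f)` modulo `π^{n+2}`, and `(η + f, v - b)` kills it up to terms divisible by `π^{n+2}`.
The corrections tend to `0` `π`-adically, so the approximations converge, and the limits solve
the equation exactly; they are units because they are congruent to `1` modulo `π`.
-/

section AdicSpanSingleton

variable {A : Type*} [CommRing A] {p : A}

lemma smodEq_span_singleton_pow_iff {x y : A} (n : ℕ) :
    x ≡ y [SMOD (Ideal.span {p} ^ n • ⊤ : Submodule A A)] ↔ p ^ n ∣ x - y := by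
  rw [SModEq.sub_mem, smul_eq_mul, Ideal.mul_top, Ideal.span_singleton_pow,
    Ideal.mem_span_singleton]

lemma eq_of_forall_pow_dvd_sub [IsHausdorff (Ideal.span {p}) A] {x y : A}
    (h : ∀ n, p ^ n ∣ x - y) : x = y :=
  IsHausdorff.eq_iff_smodEq.2 fun n => (smodEq_span_singleton_pow_iff n).2 (h n)

lemma exists_forall_pow_dvd_sub_of_pow_succ_dvd [IsPrecomplete (Ideal.span {p}) A] (s : ℕ → A)
    (hs : ∀ n, p ^ (n + 1) ∣ s (n + 1) - s n) : ∃ L : A, ∀ n, p ^ n ∣ L - s n := by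
  have hcauchy {m n : ℕ} (hmn : m ≤ n) : p ^ m ∣ s m - s n := by
    induction n, hmn using Nat.le_induction with
    | base => simp
    | succ n hmn ih =>
      have hstep : p ^ m ∣ s (n + 1) - s n := (pow_dvd_pow p (by omega)).trans (hs n)
      simpa using ih.sub hstep
  obtain ⟨L, hL⟩ := IsPrecomplete.prec inferInstance fun hmn =>
    (smodEq_span_singleton_pow_iff _).2 (hcauchy hmn)
  exact ⟨L, fun n => by simpa using ((smodEq_span_singleton_pow_iff n).1 (hL n)).neg_right⟩

lemma isUnit_of_dvd_sub_one [IsAdicComplete (Ideal.span {p}) A] {x : A} (h : p ∣ x - 1) :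
    IsUnit x :=
  Ideal.isUnit_of_sub_one_mem_jacobson_bot x <|
    IsAdicComplete.le_jacobson_bot _ (Ideal.mem_span_singleton.2 h)

lemma pow_dvd_map_of_dvd (f : A →+* A) (hp : p ∣ f p) {k : ℕ} {x : A} (h : p ^ k ∣ x) :
    p ^ k ∣ f x := by
  obtain ⟨y, rfl⟩ := h
  rw [map_mul, map_pow]
  exact (pow_dvd_pow_of_dvd hp k).mul_right _

end AdicSpanSingleton

section SuccessiveApproximation

variable {R A : Type*} [CommRing R] [CommRing A] [Algebra R A] (σ : A →+* A) (π : R) (w : A)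

def InvariantsSplitAt (n : ℕ) : Prop :=
  ∀ h : A, σ h = h → h ∈ Ideal.span ({algebraMap R A (π ^ (n + 1))} : Set A) →
    ∃ (b : R) (f : A), π ^ (n + 1) ∣ b ∧
      σ (algebraMap R A b) = algebraMap R A b ∧
      f ∈ Ideal.span ({algebraMap R A (π ^ (n + 1))} : Set A) ∧
      h - (algebraMap R A b + f + σ f) ∈ Ideal.span ({algebraMap R A (π ^ (n + 2))} : Set A)

def IsApproxSolution (n : ℕ) (e : A) (c : R) : Prop :=
  σ (algebraMap R A c) = algebraMap R A c ∧ π ∣ c - 1 ∧ algebraMap R A π ∣ e - 1 ∧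
    algebraMap R A π ^ (n + 1) ∣ algebraMap R A c * w - e * σ e

variable {σ π w}

lemma isApproxSolution_zero (hw : algebraMap R A π ∣ w - 1) : IsApproxSolution σ π w 0 1 1 := by
  refine ⟨by simp, by simp, by simp, ?_⟩
  simpa using hw

lemma IsApproxSolution.exists_succ (hord : ∀ t, σ (σ t) = t)
    (hσπ : algebraMap R A π ∣ σ (algebraMap R A π)) (hw : σ w = w)
    (hw1 : algebraMap R A π ∣ w - 1) {n : ℕ} (hsplit : InvariantsSplitAt σ π n) {e : A} {c : R}
    (happrox : IsApproxSolution σ π w n e c) :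
    ∃ (e' : A) (c' : R), IsApproxSolution σ π w (n + 1) e' c' ∧
      algebraMap R A π ^ (n + 1) ∣ e' - e ∧ π ^ (n + 1) ∣ c' - c := by
  set p := algebraMap R A π
  obtain ⟨hcσ, hc1, he1, herr⟩ := happrox
  set h := algebraMap R A c * w - e * σ e with h_def
  have hσh : σ h = h := by
    simp only [h_def, map_sub, map_mul, hcσ, hw, hord]
    ring
  obtain ⟨b, f, hb, hbσ, hf, hrem⟩ :=
    hsplit h hσh (by rwa [Ideal.mem_span_singleton, map_pow])
  simp only [Ideal.mem_span_singleton, map_pow] at hf hrem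
  have hbA : p ^ (n + 1) ∣ algebraMap R A b := by simpa using map_dvd (algebraMap R A) hb
  have hσf : p ^ (n + 1) ∣ σ f := pow_dvd_map_of_dvd σ hσπ hf
  have hσe1 : p ∣ σ e - 1 := by
    simpa using pow_dvd_map_of_dvd σ hσπ (k := 1) (x := e - 1) (by simpa using he1)
  have hnew : algebraMap R A (c - b) * w - (e + f) * σ (e + f) =
      (h - (algebraMap R A b + f + σ f)) - algebraMap R A b * (w - 1) - (e - 1) * σ f
        - f * (σ e - 1) - f * σ f := by
    rw [map_sub, map_add σ e f, h_def]
    ring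
  refine ⟨e + f, c - b, ⟨?_, ?_, ?_, ?_⟩, by simpa using hf, by simpa using hb.neg_right⟩
  · rw [map_sub, map_sub, hcσ, hbσ]
  · rw [show c - b - 1 = (c - 1) - b by ring]
    exact hc1.sub ((dvd_pow_self π n.succ_ne_zero).trans hb)
  · rw [show e + f - 1 = (e - 1) + f by ring]
    exact he1.add ((dvd_pow_self p n.succ_ne_zero).trans hf)
  · rw [hnew]
    refine (((hrem.sub ?_).sub ?_).sub ?_).sub ?_
    · exact pow_succ p (n + 1) ▸ mul_dvd_mul hbA hw1
    · exact pow_succ' p (n + 1) ▸ mul_dvd_mul he1 hσf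
    · exact pow_succ p (n + 1) ▸ mul_dvd_mul hf hσe1
    · exact (pow_dvd_pow p (by omega)).trans (pow_add p (n + 1) (n + 1) ▸ mul_dvd_mul hf hσf)

lemma exists_approxSolution_seq {e₀ : A} {c₀ : R} (h₀ : IsApproxSolution σ π w 0 e₀ c₀)
    (hstep : ∀ n e c, IsApproxSolution σ π w n e c → ∃ (e' : A) (c' : R),
      IsApproxSolution σ π w (n + 1) e' c' ∧
        algebraMap R A π ^ (n + 1) ∣ e' - e ∧ π ^ (n + 1) ∣ c' - c) :
    ∃ (e : ℕ → A) (c : ℕ → R), ∀ n, IsApproxSolution σ π w n (e n) (c n) ∧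
      algebraMap R A π ^ (n + 1) ∣ e (n + 1) - e n ∧ π ^ (n + 1) ∣ c (n + 1) - c n := by
  choose! E C hE using hstep
  let s : ℕ → A × R := fun n => Nat.rec (e₀, c₀) (fun n x => (E n x.1 x.2, C n x.1 x.2)) n
  have hs : ∀ n, IsApproxSolution σ π w n (s n).1 (s n).2 := by
    intro n
    induction n with
    | zero => exact h₀
    | succ n ih => exact (hE n _ _ ih).1
  exact ⟨fun n => (s n).1, fun n => (s n).2, fun n => ⟨hs n, (hE n _ _ (hs n)).2⟩⟩

lemma exists_solution_of_approxSolution_seq [IsAdicComplete (Ideal.span {π}) R]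
    [IsAdicComplete (Ideal.span {algebraMap R A π}) A]
    (hσπ : algebraMap R A π ∣ σ (algebraMap R A π)) {e : ℕ → A} {c : ℕ → R}
    (hseq : ∀ n, IsApproxSolution σ π w n (e n) (c n) ∧
      algebraMap R A π ^ (n + 1) ∣ e (n + 1) - e n ∧ π ^ (n + 1) ∣ c (n + 1) - c n) :
    ∃ (η : Aˣ) (v : Rˣ), σ (algebraMap R A v) = algebraMap R A v ∧
      (η : A) * σ η = algebraMap R A v * w := by
  set p := algebraMap R A π
  obtain ⟨η, hη⟩ := exists_forall_pow_dvd_sub_of_pow_succ_dvd e fun n => (hseq n).2.1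
  obtain ⟨v, hv⟩ := exists_forall_pow_dvd_sub_of_pow_succ_dvd c fun n => (hseq n).2.2
  have hvA (n : ℕ) : p ^ n ∣ algebraMap R A v - algebraMap R A (c n) := by
    simpa using map_dvd (algebraMap R A) (hv n)
  have hση (n : ℕ) : p ^ n ∣ σ η - σ (e n) := by
    simpa using pow_dvd_map_of_dvd σ hσπ (hη n)
  have hinv : σ (algebraMap R A v) = algebraMap R A v := by
    refine eq_of_forall_pow_dvd_sub (p := p) fun n => ?_
    have h := pow_dvd_map_of_dvd σ hσπ (hvA n)
    rw [map_sub, (hseq n).1.1] at h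
    simpa using h.sub (hvA n)
  have heq : algebraMap R A v * w = η * σ η := by
    refine eq_of_forall_pow_dvd_sub (p := p) fun n => ?_
    have herr := (pow_dvd_pow p n.le_succ).trans (hseq n).1.2.2.2
    rw [show algebraMap R A v * w - η * σ η =
        (algebraMap R A (c n) * w - e n * σ (e n)) + (algebraMap R A v - algebraMap R A (c n)) * w
          - η * (σ η - σ (e n)) - (η - e n) * σ (e n) by ring]
    exact ((herr.add ((hvA n).mul_right w)).sub ((hση n).mul_left η)).sub
      ((hη n).mul_right _)
  have hηu : IsUnit η :=
    isUnit_of_dvd_sub_one (p := p) <|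
      sub_add_sub_cancel η (e 1) 1 ▸ (pow_one p ▸ hη 1).add (hseq 1).1.2.2.1
  have hvu : IsUnit v :=
    isUnit_of_dvd_sub_one (p := π) <|
      sub_add_sub_cancel v (c 1) 1 ▸ (pow_one π ▸ hv 1).add (hseq 1).1.2.1
  exact ⟨hηu.unit, hvu.unit, hinv, heq.symm⟩

end SuccessiveApproximation

theorem successive_approximation_general
    (R A : Type*) [CommRing R]
    [CommRing A] [Algebra R A]
    (π : R)
    [IsAdicComplete (Ideal.span {π}) R]
    [IsAdicComplete (Ideal.span {algebraMap R A π}) A]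
    (σ : A →+* A) (hord : ∀ t, σ (σ t) = t)
    (hσπ : σ (algebraMap R A π) = algebraMap R A π ∨
      σ (algebraMap R A π) = - algebraMap R A π)
    (U : A) (hU : σ (algebraMap R A π * U) = algebraMap R A π * U)
    (hsplit : ∀ (n : ℕ) (h : A), σ h = h →
      h ∈ Ideal.span ({algebraMap R A (π ^ (n + 1))} : Set A) →
      ∃ (b : R) (f : A), π ^ (n + 1) ∣ b ∧
        σ (algebraMap R A b) = algebraMap R A b ∧
        f ∈ Ideal.span ({algebraMap R A (π ^ (n + 1))} : Set A) ∧
        h - (algebraMap R A b + f + σ f) ∈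
          Ideal.span ({algebraMap R A (π ^ (n + 2))} : Set A)) :
    ∃ (η : Aˣ) (v : Rˣ),
      σ (algebraMap R A (v : R)) = algebraMap R A (v : R) ∧
      (η : A) * σ (η : A) =
        algebraMap R A (v : R) * (1 + algebraMap R A π * U) := by
  have hσπ' : algebraMap R A π ∣ σ (algebraMap R A π) := by
    rcases hσπ with h | h <;> simp [h]
  have hw : σ (1 + algebraMap R A π * U) = 1 + algebraMap R A π * U := by
    rw [map_add, map_one, hU]
  have hw1 : algebraMap R A π ∣ (1 + algebraMap R A π * U) - 1 := by simp
  obtain ⟨e, c, hseq⟩ := exists_approxSolution_seq (isApproxSolution_zero hw1)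
    fun n _ _ happrox => happrox.exists_succ hord hσπ' hw hw1 (hsplit n)
  exact exists_solution_of_approxSolution_seq hσπ' hseq

/-- successive approximation lemma.  Let `A` be a π-adically complete,
π-torsion-free algebra over a complete discrete valuation ring `R`, and `σ` an order-2
automorphism of `A` with `σ(π) = ±π` which restricts to `R`.  Let `U ∈ A` with `σ(πU) = πU`,
and assume every `σ`-invariant element of `π^{n+1}A` is congruent to `b + f + σ(f)` modulo
`π^{n+2}` with `b ∈ π^{n+1}R` σ-invariant and `f ∈ π^{n+1}A`.  Then there are a unit `η ∈ A^×`
and a `σ`-invariant unit `v ∈ R^×` with `η·σ(η) = v·(1 + πU)`. -/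
theorem successive_approximation
    (R A : Type*) [CommRing R] [IsDomain R] [IsDiscreteValuationRing R]
    [CommRing A] [Algebra R A]
    (π : R) (hπ : Irreducible π)
    [IsAdicComplete (Ideal.span {π}) R]
    [IsAdicComplete (Ideal.span {algebraMap R A π}) A]
    (hflat : ∀ x : A, algebraMap R A π * x = 0 → x = 0)
    (σ : A →+* A) (hord : ∀ t, σ (σ t) = t)
    (hσR : ∀ r : R, ∃ r' : R, σ (algebraMap R A r) = algebraMap R A r')
    (hσπ : σ (algebraMap R A π) = algebraMap R A π ∨
      σ (algebraMap R A π) = - algebraMap R A π)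
    (U : A) (hU : σ (algebraMap R A π * U) = algebraMap R A π * U)
    (hsplit : ∀ (n : ℕ) (h : A), σ h = h →
      h ∈ Ideal.span ({algebraMap R A (π ^ (n + 1))} : Set A) →
      ∃ (b : R) (f : A), π ^ (n + 1) ∣ b ∧
        σ (algebraMap R A b) = algebraMap R A b ∧
        f ∈ Ideal.span ({algebraMap R A (π ^ (n + 1))} : Set A) ∧
        h - (algebraMap R A b + f + σ f) ∈
          Ideal.span ({algebraMap R A (π ^ (n + 2))} : Set A)) :
    ∃ (η : Aˣ) (v : Rˣ),
      σ (algebraMap R A (v : R)) = algebraMap R A (v : R) ∧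
      (η : A) * σ (η : A) =
        algebraMap R A (v : R) * (1 + algebraMap R A π * U) :=
  successive_approximation_general R A π σ hord hσπ U hU hsplit
end

section
/- Descent of the annulus algebra along a totally tamely ramified quadratic-type extension: let R be a complete DVR with uniformizer π and residue characteristic prime to m, R' = R[ϖ] with ϖ^m = π, ζ ∈ R a primitive m-th root of unity, σ the R-automorphism of R' sending ϖ to ζϖ. Write e = a + bm with 0 ≤ a < m, b ≥ 0, set A' = R'[[X,Y]]/(XY − ϖ^e), and extend σ to A' by σ(X) = ζ^α X, σ(Y) = ζ^β Y where α + β ≡ e (mod m), 0 ≤ α, β ≤ m−1. Then the ring of σ-coinvariants of the coefficient-wise descent of A' is isomorphic to R[[X_α, Y_β]]/(X_α Y_β − π^b) if α + β = a, and to R[[X_α, Y_β]]/(π·X_α Y_β − π^b) if α + β = m + a. -/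
/-!
Setting every variable other than `X_α` and `Y_β` to zero is a surjection
`killCompl : R⟦X_•, Y_•⟧ → R⟦X_α, Y_β⟧` whose kernel is spanned by the killed variables.
Each killed variable `X` lies in the coinvariant ideal, since `X - σ X = (1 - ζ ^ w) X` with
`w ≢ 0 (mod m)`, so that `1 - ζ ^ w` is a unit; conversely `σ` fixes every monomial in `X_α, Y_β`.
Hence the coinvariant ideal is exactly the kernel, and the coinvariant ring is `R⟦X_α, Y_β⟧` modulo
the images of the `f_i`. These vanish for `i ≠ a`, while `f_a` maps to `X_α Y_β - π ^ b` or to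
`π X_α Y_β - π ^ b` according as `α + β = a` or `α + β = m + a`.
-/

noncomputable section

open scoped BigOperators

/-- The coefficient equations `f_i` obtained by expanding `XY − ϖ^e` in the basis
`1, ϖ, …, ϖ^{m−1}` of `R' = R[ϖ]` over `R`, after writing `X = Σ X_j ϖ^j`, `Y = Σ Y_j ϖ^j`:
`f_i = Σ_{j+k=i} X_j Y_k + (Σ_{j+k=m+i} X_j Y_k)·π − δ_{a,i}·π^b`.
Here the variables are indexed by `Fin m ⊕ Fin m` (`inl` for the `X_j`, `inr` for the `Y_j`). -/
def descentEq {R : Type*} [CommRing R] (m : ℕ) (π : R) (a b : ℕ) (i : Fin m) :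
    MvPowerSeries (Fin m ⊕ Fin m) R :=
  (∑ j : Fin m, ∑ k : Fin m,
      if (j : ℕ) + (k : ℕ) = (i : ℕ) then
        (MvPowerSeries.X (Sum.inl j) : MvPowerSeries (Fin m ⊕ Fin m) R) *
          MvPowerSeries.X (Sum.inr k)
      else 0) +
  (∑ j : Fin m, ∑ k : Fin m,
      if (j : ℕ) + (k : ℕ) = m + (i : ℕ) then
        (MvPowerSeries.X (Sum.inl j) : MvPowerSeries (Fin m ⊕ Fin m) R) *
          MvPowerSeries.X (Sum.inr k)
      else 0) * MvPowerSeries.C (σ := Fin m ⊕ Fin m) (R := R) π -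
  (if (i : ℕ) = a then MvPowerSeries.C (σ := Fin m ⊕ Fin m) (R := R) (π ^ b) else 0)

/-- The semilinear Galois action on the descent ring: `σ(X_j) = ζ^{α−j}X_j`,
`σ(Y_j) = ζ^{β−j}Y_j` (exponents mod `m`), defined coefficientwise. -/
def descentAction {R : Type*} [CommRing R] (m : ℕ) (ζ : R) (α β : ℕ)
    (t : MvPowerSeries (Fin m ⊕ Fin m) R) : MvPowerSeries (Fin m ⊕ Fin m) R :=
  fun d : (Fin m ⊕ Fin m) →₀ ℕ =>
    ζ ^ (∑ v : Fin m ⊕ Fin m,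
        (Sum.elim (fun j : Fin m => (α + m - (j : ℕ)) % m)
          (fun j : Fin m => (β + m - (j : ℕ)) % m) v) * d v) *
      MvPowerSeries.coeff (R := R) d t

namespace MvPowerSeries

variable {σ τ R : Type*} [CommRing R]

theorem mem_span_X_image_of_coeff_eq_zero {S : Set τ} (hS : S.Finite) {f : MvPowerSeries τ R}
    (hf : ∀ d : τ →₀ ℕ, (∀ s ∈ S, d s = 0) → coeff d f = 0) :
    f ∈ Ideal.span (X '' S) := by
  classical
  induction S, hS using Set.Finite.induction_on generalizing f with
  | empty =>
    have hf0 : f = 0 := by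
      ext d
      simpa using hf d (by simp)
    simp [hf0]
  | @insert s S _ _ ih =>
    let g : MvPowerSeries τ R := fun d => if d s = 0 then coeff d f else 0
    have hg : g ∈ Ideal.span (X '' S) := ih fun d hd => by
      change (if d s = 0 then coeff d f else 0) = 0
      split_ifs with hds
      · exact hf d (by simpa [hds] using hd)
      · rfl
    obtain ⟨q, hq⟩ : X s ∣ f - g := X_dvd_iff.mpr fun d hds => by
      change coeff d f - (if d s = 0 then coeff d f else 0) = 0
      simp [hds]
    rw [← sub_add_cancel f g, hq]
    exact add_mem (Ideal.mul_mem_right _ _ (Ideal.subset_span ⟨s, Set.mem_insert _ _, rfl⟩))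
      (Ideal.span_mono (Set.image_mono (Set.subset_insert _ _)) hg)

theorem ker_killCompl [Finite τ] (e : σ ↪ τ) :
    RingHom.ker (killCompl (R := R) e) = Ideal.span (X '' (Set.range e)ᶜ) := by
  refine le_antisymm (fun f hf => ?_) ?_
  · refine mem_span_X_image_of_coeff_eq_zero (Set.toFinite _) fun d hd => ?_
    obtain ⟨x, rfl⟩ : d ∈ Set.range (Finsupp.embDomain e) :=
      (Finsupp.mem_range_embDomain_iff _ _).mpr fun t ht =>
        by_contra fun h => Finsupp.mem_support_iff.mp ht (hd t h)
    rw [← coeff_killCompl, RingHom.mem_ker.mp hf, map_zero]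
  · rw [Ideal.span_le]
    rintro _ ⟨t, ht, rfl⟩
    exact killCompl_X_eq_zero ht

theorem killCompl_surjective (e : σ ↪ τ) : Function.Surjective (killCompl (R := R) e) :=
  fun p => ⟨rename e p, killCompl_rename_app p⟩

variable [Fintype τ]

/-- The substitution `X t ↦ c ^ w t • X t`, written coefficientwise. -/
def weightAction (c : R) (w : τ → ℕ) (f : MvPowerSeries τ R) : MvPowerSeries τ R :=
  fun d => c ^ (∑ t, w t * d t) * coeff d f

theorem coeff_weightAction (c : R) (w : τ → ℕ) (f : MvPowerSeries τ R) (d : τ →₀ ℕ) :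
    coeff d (weightAction c w f) = c ^ (∑ t, w t * d t) * coeff d f :=
  rfl

theorem X_sub_weightAction_X [DecidableEq τ] (c : R) (w : τ → ℕ) (t : τ) :
    X t - weightAction c w (X t) = C (1 - c ^ w t) * X t := by
  ext d
  rw [map_sub, coeff_weightAction, coeff_C_mul, coeff_X]
  split_ifs with hd
  · simp [hd, Finsupp.single_apply]
  · simp

theorem killCompl_weightAction {e : σ ↪ τ} {w : τ → ℕ} (hw : ∀ i, w (e i) = 0) (c : R)
    (f : MvPowerSeries τ R) : killCompl e (weightAction c w f) = killCompl e f := by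
  classical
  ext x
  rw [coeff_killCompl, coeff_killCompl, coeff_weightAction, Finset.sum_eq_zero, pow_zero, one_mul]
  intro t _
  by_cases ht : t ∈ Set.range e
  · obtain ⟨i, rfl⟩ := ht
    rw [hw, zero_mul]
  · rw [Finsupp.embDomain_of_notMem_range _ _ _ ht, mul_zero]

theorem ker_killCompl_eq_span_sub_weightAction {e : σ ↪ τ} {c : R} {w : τ → ℕ}
    (hw : ∀ i, w (e i) = 0) (hunit : ∀ t ∉ Set.range e, IsUnit (1 - c ^ w t)) :
    RingHom.ker (killCompl (R := R) e) = Ideal.span {x | ∃ t, x = t - weightAction c w t} := by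
  classical
  refine le_antisymm ?_ ?_
  · rw [ker_killCompl, Ideal.span_le]
    rintro _ ⟨t, ht, rfl⟩
    obtain ⟨u, hu⟩ := (hunit t ht).map (C (σ := τ) (R := R))
    have hX : (X t : MvPowerSeries τ R) =
        (↑u⁻¹ : MvPowerSeries τ R) * (X t - weightAction c w (X t)) := by
      rw [X_sub_weightAction_X, ← hu, Units.inv_mul_cancel_left]
    rw [SetLike.mem_coe, hX]
    exact Ideal.mul_mem_left _ _ (Ideal.subset_span ⟨X t, rfl⟩)
  · rw [Ideal.span_le]
    rintro _ ⟨t, rfl⟩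
    rw [SetLike.mem_coe, RingHom.mem_ker, map_sub, killCompl_weightAction hw, sub_self]

end MvPowerSeries

theorem Ideal.span_range_ite_eq_span_singleton {ι A : Type*} [Semiring A] {p : ι → Prop}
    [DecidablePred p] (hp : ∃ i, p i) (g : A) :
    Ideal.span (Set.range fun i => if p i then g else 0) = Ideal.span {g} := by
  refine le_antisymm (Ideal.span_le.mpr ?_) (Ideal.span_le.mpr ?_)
  · rintro _ ⟨i, rfl⟩
    dsimp only
    split_ifs
    · exact Ideal.subset_span rfl
    · exact Ideal.zero_mem _
  · obtain ⟨i, hi⟩ := hp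
    rintro _ rfl
    exact Ideal.subset_span ⟨i, if_pos hi⟩

noncomputable def Ideal.quotientSupKerEquivMap {A B F : Type*} [CommRing A] [CommRing B]
    [FunLike F A B] [RingHomClass F A B] {f : F} (hf : Function.Surjective f) (I : Ideal A) :
    A ⧸ (I ⊔ RingHom.ker f) ≃+* B ⧸ I.map f :=
  (Ideal.quotEquivOfEq (by
      rw [← RingHom.comap_ker, Ideal.mk_ker, Ideal.comap_coe,
        Ideal.comap_map_of_surjective' f hf])).trans
    (RingHom.quotientKerEquivOfSurjective (f := (Ideal.Quotient.mk (I.map f)).comp (f : A →+* B))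
      (Ideal.Quotient.mk_surjective.comp hf))

theorem sum_sum_ite_mul_ite_eq {ι T : Type*} [Fintype ι] [DecidableEq ι] [Semiring T]
    (c : ι → ι → Prop) [DecidableRel c] (A B : ι) (x y : T) :
    ∑ j, ∑ k, (if c j k then (if j = A then x else 0) * (if k = B then y else 0) else 0) =
      if c A B then x * y else 0 := by
  calc _ = ∑ j, ∑ k, if j = A then (if k = B then (if c A B then x * y else 0) else 0) else 0 := by
        refine Finset.sum_congr rfl fun j _ => Finset.sum_congr rfl fun k _ => ?_
        by_cases hj : j = A <;> by_cases hk : k = B <;> simp [hj, hk]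
    _ = _ := by simp

theorem Nat.add_sub_mod_eq_zero_iff {x y m : ℕ} (hx : x < m) (hy : y < m) :
    (x + m - y) % m = 0 ↔ x = y := by
  rcases le_or_gt y x with h | h
  · rw [show x + m - y = x - y + m by omega, Nat.add_mod_right, Nat.mod_eq_of_lt (by omega)]
    omega
  · rw [Nat.mod_eq_of_lt (by omega)]
    omega

section Descent

open MvPowerSeries

variable {R : Type*} [CommRing R] {m : ℕ}

def descentWeight (m α β : ℕ) : Fin m ⊕ Fin m → ℕ :=
  Sum.elim (fun j => (α + m - j) % m) (fun j => (β + m - j) % m)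

theorem descentAction_eq_weightAction (ζ : R) (α β : ℕ) :
    descentAction m ζ α β = weightAction ζ (descentWeight m α β) :=
  rfl

theorem descentWeight_lt {α β : ℕ} (hm : 0 < m) (t : Fin m ⊕ Fin m) :
    descentWeight m α β t < m := by
  cases t <;> exact Nat.mod_lt _ hm

def descentVarsEmb (A B : Fin m) : Fin 2 ↪ Fin m ⊕ Fin m :=
  ⟨![Sum.inl A, Sum.inr B], by intro i j; fin_cases i <;> fin_cases j <;> simp⟩

@[simp]
theorem descentVarsEmb_zero (A B : Fin m) : descentVarsEmb A B 0 = Sum.inl A :=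
  rfl

@[simp]
theorem descentVarsEmb_one (A B : Fin m) : descentVarsEmb A B 1 = Sum.inr B :=
  rfl

theorem range_descentVarsEmb (A B : Fin m) :
    Set.range (descentVarsEmb A B) = {Sum.inl A, Sum.inr B} := by
  ext t
  simp [Fin.exists_fin_two, eq_comm]

theorem descentWeight_eq_zero_iff {α β : ℕ} (hα : α < m) (hβ : β < m) (t : Fin m ⊕ Fin m) :
    descentWeight m α β t = 0 ↔ t ∈ Set.range (descentVarsEmb ⟨α, hα⟩ ⟨β, hβ⟩) := by
  cases t <;> simp [descentWeight, range_descentVarsEmb, Nat.add_sub_mod_eq_zero_iff, Fin.ext_iff,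
    eq_comm, hα, hβ]

theorem ker_killCompl_descentVarsEmb {ζ : R} (hprim : ∀ j : ℕ, ¬ m ∣ j → IsUnit (ζ ^ j - 1))
    {α β : ℕ} (hα : α < m) (hβ : β < m) :
    RingHom.ker (killCompl (R := R) (descentVarsEmb ⟨α, hα⟩ ⟨β, hβ⟩)) =
      Ideal.span {x | ∃ t, x = t - descentAction m ζ α β t} := by
  rw [descentAction_eq_weightAction]
  refine ker_killCompl_eq_span_sub_weightAction (fun i => ?_) fun t ht => ?_
  · exact (descentWeight_eq_zero_iff hα hβ _).mpr ⟨i, rfl⟩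
  · have hne : descentWeight m α β t ≠ 0 := mt (descentWeight_eq_zero_iff hα hβ t).mp ht
    have hndvd : ¬ m ∣ descentWeight m α β t := fun h =>
      hne (Nat.eq_zero_of_dvd_of_lt h (descentWeight_lt (by omega) t))
    simpa using (hprim _ hndvd).neg

theorem killCompl_descentVarsEmb_X_inl (A B j : Fin m) :
    killCompl (R := R) (descentVarsEmb A B) (X (Sum.inl j)) = if j = A then X 0 else 0 := by
  split_ifs with h
  · subst h
    exact killCompl_X (e := descentVarsEmb j B) 0
  · exact killCompl_X_eq_zero (by simp [range_descentVarsEmb, h])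

theorem killCompl_descentVarsEmb_X_inr (A B k : Fin m) :
    killCompl (R := R) (descentVarsEmb A B) (X (Sum.inr k)) = if k = B then X 1 else 0 := by
  split_ifs with h
  · subst h
    exact killCompl_X (e := descentVarsEmb A k) 1
  · exact killCompl_X_eq_zero (by simp [range_descentVarsEmb, h])

theorem killCompl_descentEq (π : R) (a b : ℕ) (A B i : Fin m) :
    killCompl (descentVarsEmb A B) (descentEq m π a b i) =
      (if (A : ℕ) + B = i then X 0 * X 1 else 0) +
        (if (A : ℕ) + B = m + i then X 0 * X 1 else 0) * C π -
        if (i : ℕ) = a then C (π ^ b) else 0 := by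
  simp only [descentEq, map_sub, map_add, map_mul, map_sum, apply_ite (killCompl _), map_zero,
    killCompl_C, killCompl_descentVarsEmb_X_inl, killCompl_descentVarsEmb_X_inr,
    sum_sum_ite_mul_ite_eq]

theorem nonempty_quotient_ringEquiv_of_killCompl_descentEq
    {π ζ : R} {a b α β : ℕ} (hprim : ∀ j : ℕ, ¬ m ∣ j → IsUnit (ζ ^ j - 1)) (ha : a < m)
    (hα : α < m) (hβ : β < m) (g : MvPowerSeries (Fin 2) R)
    (hg : ∀ i : Fin m, killCompl (descentVarsEmb ⟨α, hα⟩ ⟨β, hβ⟩) (descentEq m π a b i) =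
      if (i : ℕ) = a then g else 0) :
    Nonempty ((MvPowerSeries (Fin m ⊕ Fin m) R ⧸
        (Ideal.span (Set.range (descentEq (R := R) m π a b)) ⊔
          Ideal.span {x : MvPowerSeries (Fin m ⊕ Fin m) R |
            ∃ t, x = t - descentAction m ζ α β t})) ≃+*
      MvPowerSeries (Fin 2) R ⧸ Ideal.span {g}) := by
  rw [← ker_killCompl_descentVarsEmb hprim hα hβ]
  refine ⟨(Ideal.quotientSupKerEquivMap (killCompl_surjective _) _).trans
    (Ideal.quotEquivOfEq ?_)⟩
  rw [Ideal.map_span, ← Set.range_comp, Function.comp_def]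
  simp_rw [hg]
  exact Ideal.span_range_ite_eq_span_singleton (p := fun i : Fin m => (i : ℕ) = a)
    ⟨⟨a, ha⟩, rfl⟩ g

end Descent

theorem descent_of_annulus_algebra_general
    (R : Type*) [CommRing R]
    (π : R) (m : ℕ)
    (ζ : R) (hprim : ∀ j : ℕ, ¬ m ∣ j → IsUnit (ζ ^ j - 1))
    (a b : ℕ) (ha : a < m)
    (α β : ℕ) (hα : α < m) (hβ : β < m) :
    (α + β = a →
      Nonempty
        ((MvPowerSeries (Fin m ⊕ Fin m) R ⧸
            (Ideal.span (Set.range (descentEq (R := R) m π a b)) ⊔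
              Ideal.span {x : MvPowerSeries (Fin m ⊕ Fin m) R |
                ∃ t, x = t - descentAction m ζ α β t})) ≃+*
          (MvPowerSeries (Fin 2) R ⧸
            Ideal.span {(MvPowerSeries.X 0 : MvPowerSeries (Fin 2) R) * MvPowerSeries.X 1 -
              MvPowerSeries.C (σ := Fin 2) (R := R) (π ^ b)}))) ∧
    (α + β = m + a →
      Nonempty
        ((MvPowerSeries (Fin m ⊕ Fin m) R ⧸
            (Ideal.span (Set.range (descentEq (R := R) m π a b)) ⊔
              Ideal.span {x : MvPowerSeries (Fin m ⊕ Fin m) R |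
                ∃ t, x = t - descentAction m ζ α β t})) ≃+*
          (MvPowerSeries (Fin 2) R ⧸
            Ideal.span {MvPowerSeries.C (σ := Fin 2) (R := R) π *
                ((MvPowerSeries.X 0 : MvPowerSeries (Fin 2) R) * MvPowerSeries.X 1) -
              MvPowerSeries.C (σ := Fin 2) (R := R) (π ^ b)}))) := by
  constructor <;> intro hsum <;>
  · refine nonempty_quotient_ringEquiv_of_killCompl_descentEq hprim ha hα hβ _ fun i => ?_
    have hi := i.isLt
    rw [killCompl_descentEq, Fin.val_mk, Fin.val_mk]
    split_ifs <;> first | omega | ring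

/-- descent of the annulus algebra along a totally tamely ramified extension.
For `R' = R[ϖ]`, `ϖ^m = π`, `σ(ϖ) = ζϖ` with `ζ` a primitive `m`-th root of unity, write
`e = a + bm` (`0 ≤ a < m`) and let `A' = R'[[X,Y]]/(XY − ϖ^e)` with `σ(X) = ζ^α X`,
`σ(Y) = ζ^β Y`, `α + β ≡ e (mod m)`.  The ring of `σ`-coinvariants of the coefficientwise
descent of `A'` is `R[[X_α,Y_β]]/(X_αY_β − π^b)` if `α + β = a`, and
`R[[X_α,Y_β]]/(π·X_αY_β − π^b)` if `α + β = m + a`. -/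
theorem descent_of_annulus_algebra
    (R : Type*) [CommRing R] [IsDomain R] [IsDiscreteValuationRing R]
    (π : R) (hπ : Irreducible π) [IsAdicComplete (Ideal.span {π}) R]
    (m : ℕ) (hm : 0 < m) (hmu : IsUnit (m : R))
    (ζ : R) (hζ : ζ ^ m = 1) (hprim : ∀ j : ℕ, ¬ m ∣ j → IsUnit (ζ ^ j - 1))
    (e a b : ℕ) (ha : a < m) (he : e = a + b * m)
    (α β : ℕ) (hα : α < m) (hβ : β < m) (hαβ : (α + β) % m = e % m) :
    (α + β = a →
      Nonempty
        ((MvPowerSeries (Fin m ⊕ Fin m) R ⧸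
            (Ideal.span (Set.range (descentEq (R := R) m π a b)) ⊔
              Ideal.span {x : MvPowerSeries (Fin m ⊕ Fin m) R |
                ∃ t, x = t - descentAction m ζ α β t})) ≃+*
          (MvPowerSeries (Fin 2) R ⧸
            Ideal.span {(MvPowerSeries.X 0 : MvPowerSeries (Fin 2) R) * MvPowerSeries.X 1 -
              MvPowerSeries.C (σ := Fin 2) (R := R) (π ^ b)}))) ∧
    (α + β = m + a →
      Nonempty
        ((MvPowerSeries (Fin m ⊕ Fin m) R ⧸
            (Ideal.span (Set.range (descentEq (R := R) m π a b)) ⊔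
              Ideal.span {x : MvPowerSeries (Fin m ⊕ Fin m) R |
                ∃ t, x = t - descentAction m ζ α β t})) ≃+*
          (MvPowerSeries (Fin 2) R ⧸
            Ideal.span {MvPowerSeries.C (σ := Fin 2) (R := R) π *
                ((MvPowerSeries.X 0 : MvPowerSeries (Fin 2) R) * MvPowerSeries.X 1) -
              MvPowerSeries.C (σ := Fin 2) (R := R) (π ^ b)}))) :=
  descent_of_annulus_algebra_general R π m ζ hprim a b ha α β hα hβ
end
end

section
/- A bounded analytic function on a closed annulus has only finitely many zeros: let R be a complete DVR with uniformizer π, K = Frac(R) with algebraic closure K^alg, e > 0, and let f = Σ_{i∈ℤ} a_i X^i be a nonzero element of A = R{X,Y}/(XY − π^e) written as a Laurent series in X. Then the set { x ∈ K^alg : |π|^e ≤ |x| ≤ 1 and Σ a_i x^i = 0 } is finite. -/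
/-!
Write `f = ∑ bᵢ Xⁱ` and `w_ρ(i) = ‖bᵢ‖ ρⁱ` for the radii `r = |π|^e ≤ s = 1`. Let `i₀` be the
largest index maximising `w_s` and `j₀` the smallest index maximising `w_r`; comparing the two
weights gives `j₀ ≤ i₀`. If `i₀ = j₀`, the term `b_{i₀} x^{i₀}` strictly dominates all others on
`r ≤ |x| ≤ s`, so `f` has no zero there. Otherwise, for a zero `z` the quotient `g = f / (X - z)`
again converges on the annulus, and multiplying `g` by `X - z` raises the first index by one and
keeps the second. By induction, `f` has at most `i₀ - j₀` zeros on the annulus.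
-/

open Filter Topology

namespace AnnulusZeros

lemma finite_setOf_le_of_tendsto_zero {ι : Type*} {g : ι → ℝ} (hg : Tendsto g cofinite (𝓝 0))
    {c : ℝ} (hc : 0 < c) : {j | c ≤ g j}.Finite := by
  simpa only [not_lt] using eventually_cofinite.1 (hg.eventually (gt_mem_nhds hc))

lemma exists_forall_ge_of_tendsto_zero {ι : Type*} {g : ι → ℝ} (hg : Tendsto g cofinite (𝓝 0))
    {i₁ : ι} (h : 0 < g i₁) : ∃ i, ∀ j, g j ≤ g i := by
  obtain ⟨i, hi, hmax⟩ :=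
    Set.exists_max_image _ g (finite_setOf_le_of_tendsto_zero hg h) ⟨i₁, le_refl (g i₁)⟩
  exact ⟨i, fun j => (le_total (g i₁) (g j)).elim (hmax j) fun hj => hj.trans hi⟩

lemma tendsto_atTop_zero_of_tail_bound {α : Type*} [Preorder α] {g h : α → ℝ}
    (hg : Tendsto g atTop (𝓝 0)) (hh : ∀ m, 0 ≤ h m)
    (H : ∀ m C, 0 ≤ C → (∀ i, m ≤ i → g i ≤ C) → h m ≤ C) : Tendsto h atTop (𝓝 0) := by
  refine tendsto_order.2 ⟨fun a ha => .of_forall fun m => ha.trans_le (hh m), fun ε hε => ?_⟩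
  filter_upwards [eventually_forall_ge_atTop.2 (hg.eventually (ge_mem_nhds (half_pos hε)))]
    with m hm
  exact (H m _ (half_pos hε).le hm).trans_lt (half_lt_self hε)

lemma zpow_le_zpow_left_of_nonpos {a b : ℝ} {n : ℤ} (ha : 0 < a) (hab : a ≤ b) (hn : n ≤ 0) :
    b ^ n ≤ a ^ n := by
  simpa [inv_zpow'] using
    zpow_le_zpow_left₀ (neg_nonneg.2 hn) (inv_nonneg.2 (ha.trans_le hab).le) (inv_anti₀ ha hab)

lemma mul_zpow_lt_mul_zpow_of_le {a c r t : ℝ} {j d : ℤ} (hr : 0 < r) (hrt : r ≤ t)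
    (hjd : j ≤ d) (ha : 0 ≤ a) (h : a * r ^ j < c * r ^ d) : a * t ^ j < c * t ^ d := by
  have hq : 1 ≤ t / r := (one_le_div hr).2 hrt
  have ht (k : ℤ) : t ^ k = r ^ k * (t / r) ^ k := by rw [← mul_zpow, mul_div_cancel₀ _ hr.ne']
  calc a * t ^ j = a * r ^ j * (t / r) ^ j := by rw [ht, mul_assoc]
    _ ≤ a * r ^ j * (t / r) ^ d := by gcongr
    _ < c * r ^ d * (t / r) ^ d := mul_lt_mul_of_pos_right h (zpow_pos (one_pos.trans_le hq) _)
    _ = c * t ^ d := by rw [ht, mul_assoc]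

lemma mul_zpow_lt_mul_zpow_of_ge {a c s t : ℝ} {j d : ℤ} (ht : 0 < t) (hts : t ≤ s)
    (hdj : d ≤ j) (ha : 0 ≤ a) (h : a * s ^ j < c * s ^ d) : a * t ^ j < c * t ^ d := by
  simpa [inv_zpow'] using mul_zpow_lt_mul_zpow_of_le (inv_pos.2 (ht.trans_le hts))
    (inv_anti₀ ht hts) (neg_le_neg hdj) ha (by simpa [inv_zpow'] using h)

section Dominant

variable {g : ℤ → ℝ} {i j : ℤ}

def IsLastMax (g : ℤ → ℝ) (i : ℤ) : Prop := (∀ j, g j ≤ g i) ∧ ∀ j, i < j → g j < g i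

def IsFirstMax (g : ℤ → ℝ) (i : ℤ) : Prop := (∀ j, g j ≤ g i) ∧ ∀ j, j < i → g j < g i

lemma IsLastMax.unique (hi : IsLastMax g i) (hj : IsLastMax g j) : i = j :=
  le_antisymm (not_lt.1 fun h => (hj.2 i h).not_ge (hi.1 j))
    (not_lt.1 fun h => (hi.2 j h).not_ge (hj.1 i))

lemma IsFirstMax.unique (hi : IsFirstMax g i) (hj : IsFirstMax g j) : i = j :=
  le_antisymm (not_lt.1 fun h => (hi.2 j h).not_ge (hj.1 i))
    (not_lt.1 fun h => (hj.2 i h).not_ge (hi.1 j))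

lemma IsLastMax.pos (hi : IsLastMax g i) (hg : ∀ j, 0 ≤ g j) : 0 < g i :=
  (hg _).trans_lt (hi.2 _ (lt_add_one i))

lemma exists_isLastMax (hg : Tendsto g cofinite (𝓝 0)) (h : ∃ i, 0 < g i) :
    ∃ i, IsLastMax g i := by
  obtain ⟨i₁, h⟩ := h
  obtain ⟨a, ha⟩ := exists_forall_ge_of_tendsto_zero hg h
  obtain ⟨i, hi, hmax⟩ := Set.exists_max_image _ id
    (finite_setOf_le_of_tendsto_zero hg (h.trans_le (ha i₁))) ⟨a, le_refl (g a)⟩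
  exact ⟨i, fun j => (ha j).trans hi, fun j hij => lt_of_not_ge fun hj =>
    hij.not_ge (hmax j (hi.trans hj))⟩

lemma exists_isFirstMax (hg : Tendsto g cofinite (𝓝 0)) (h : ∃ i, 0 < g i) :
    ∃ i, IsFirstMax g i := by
  obtain ⟨i₁, h⟩ := h
  obtain ⟨a, ha⟩ := exists_forall_ge_of_tendsto_zero hg h
  obtain ⟨i, hi, hmin⟩ := Set.exists_min_image _ id
    (finite_setOf_le_of_tendsto_zero hg (h.trans_le (ha i₁))) ⟨a, le_refl (g a)⟩
  exact ⟨i, fun j => (ha j).trans hi, fun j hij => lt_of_not_ge fun hj =>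
    hij.not_ge (hmin j (hi.trans hj))⟩

end Dominant

section Ultrametric

variable {L : Type*} [NormedField L] [IsUltrametricDist L]

lemma norm_sub_le_max (x y : L) : ‖x - y‖ ≤ max ‖x‖ ‖y‖ := by
  simpa [sub_eq_add_neg] using IsUltrametricDist.norm_add_le_max x (-y)

lemma norm_sub_eq_max_of_norm_ne_norm {x y : L} (h : ‖x‖ ≠ ‖y‖) : ‖x - y‖ = max ‖x‖ ‖y‖ := by
  simpa [sub_eq_add_neg] using
    IsUltrametricDist.norm_add_eq_max_of_norm_ne_norm (y := -y) (by rwa [norm_neg])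

lemma tsum_ne_zero_of_norm_lt {ι : Type*} [DecidableEq ι] {f : ι → L} (hf : Summable f) {d : ι}
    (hd : f d ≠ 0) (hlt : ∀ j, j ≠ d → ‖f j‖ < ‖f d‖) : ∑' j, f j ≠ 0 := by
  set t : ι → L := fun j => if j = d then 0 else f j
  have htd (j : ι) : ‖t j‖ < ‖f d‖ := by
    by_cases hj : j = d
    · simpa [t, hj] using hd
    · simpa [t, hj] using hlt j hj
  have ht : Tendsto (fun j => ‖t j‖) cofinite (𝓝 0) :=
    squeeze_zero (fun _ => norm_nonneg _) (fun j => by by_cases hj : j = d <;> simp [t, hj])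
      (tendsto_zero_iff_norm_tendsto_zero.1 hf.tendsto_cofinite_zero)
  -- the tail attains its sup, so it stays strictly below `‖f d‖`
  obtain ⟨C, hC0, hCd, hC⟩ : ∃ C, 0 ≤ C ∧ C < ‖f d‖ ∧ ∀ j, ‖t j‖ ≤ C := by
    by_cases hpos : ∃ j, 0 < ‖t j‖
    · obtain ⟨j, hj⟩ := hpos
      obtain ⟨a, ha⟩ := exists_forall_ge_of_tendsto_zero ht hj
      exact ⟨‖t a‖, norm_nonneg _, htd a, ha⟩
    · simp only [not_exists, not_lt] at hpos
      exact ⟨0, le_rfl, norm_pos_iff.2 hd, hpos⟩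
  have htail : ‖∑' j, t j‖ < ‖f d‖ :=
    (IsUltrametricDist.norm_tsum_le_of_forall_le_of_nonneg hC0 hC).trans_lt hCd
  rw [hf.tsum_eq_add_tsum_ite d, ← norm_ne_zero_iff,
    IsUltrametricDist.norm_add_eq_max_of_norm_ne_norm htail.ne', max_eq_left htail.le]
  exact norm_ne_zero_iff.2 hd

lemma norm_tsum_mul_le_of_forall_le {ι : Type*} {f : ι → L} {c C : ℝ} (hc : 0 < c) (hC : 0 ≤ C)
    (h : ∀ i, ‖f i‖ * c ≤ C) : ‖∑' i, f i‖ * c ≤ C :=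
  (le_div_iff₀ hc).1 <| IsUltrametricDist.norm_tsum_le_of_forall_le_of_nonneg
    (div_nonneg hC hc.le) fun i => (le_div_iff₀ hc).2 (h i)

end Ultrametric

section Weights

variable {L : Type*} [NormedField L] {b q : ℤ → L} {z : L} {ρ : ℝ}

lemma ne_zero_of_isLastMax {i : ℤ} (hρ : 0 < ρ) (hi : IsLastMax (fun i => ‖b i‖ * ρ ^ i) i) :
    b i ≠ 0 :=
  norm_ne_zero_iff.1 <| left_ne_zero_of_mul <|
    (hi.pos fun j => mul_nonneg (norm_nonneg _) (zpow_nonneg hρ.le j)).ne'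

lemma IsFirstMax.le_of_isLastMax {r s : ℝ} {i j : ℤ} (hr : 0 < r) (hrs : r ≤ s)
    (hj : IsFirstMax (fun i => ‖b i‖ * r ^ i) j) (hi : IsLastMax (fun i => ‖b i‖ * s ^ i) i) :
    j ≤ i :=
  not_lt.1 fun h =>
    (mul_zpow_lt_mul_zpow_of_ge hr hrs h.le (norm_nonneg _) (hi.2 j h)).not_ge (hj.1 i)

lemma mul_mul_zpow_sub_one (hρ : 0 < ρ) (a : ℝ) (m : ℤ) : ρ * (a * ρ ^ (m - 1)) = a * ρ ^ m := by
  rw [mul_left_comm, ← zpow_one_add₀ hρ.ne', add_sub_cancel]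

lemma max_norm_mul_zpow (hρ : 0 < ρ) (m : ℤ) :
    max ‖q (m - 1)‖ ‖z * q m‖ * ρ ^ m =
      max (ρ * (‖q (m - 1)‖ * ρ ^ (m - 1))) (‖z‖ * (‖q m‖ * ρ ^ m)) := by
  rw [max_mul_of_nonneg _ _ (zpow_nonneg hρ.le m), mul_mul_zpow_sub_one hρ, norm_mul, mul_assoc]

variable [IsUltrametricDist L]

/-- On the annulus `r ≤ ‖x‖ ≤ s`, a common dominant index of both boundary circles gives a
strictly dominant term. -/
lemma tsum_mul_zpow_ne_zero {r s : ℝ} {d : ℤ} {x : L} (hr : 0 < r)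
    (hs : IsLastMax (fun i => ‖b i‖ * s ^ i) d) (hr' : IsFirstMax (fun i => ‖b i‖ * r ^ i) d)
    (hx : r ≤ ‖x‖) (hx' : ‖x‖ ≤ s) (hsum : Summable fun i => b i * x ^ i) :
    ∑' i, b i * x ^ i ≠ 0 := by
  have hx0 : 0 < ‖x‖ := hr.trans_le hx
  refine tsum_ne_zero_of_norm_lt hsum (mul_ne_zero (ne_zero_of_isLastMax (hx0.trans_le hx') hs)
    (zpow_ne_zero _ (norm_pos_iff.1 hx0))) fun j hj => ?_
  rw [norm_mul, norm_mul, norm_zpow, norm_zpow]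
  rcases hj.lt_or_gt with hj | hj
  · exact mul_zpow_lt_mul_zpow_of_le hr hx hj.le (norm_nonneg _) (hr'.2 j hj)
  · exact mul_zpow_lt_mul_zpow_of_ge hx0 hx' hj.le (norm_nonneg _) (hs.2 j hj)

lemma norm_sub_mul_zpow_le (hρ : 0 < ρ) (m : ℤ) :
    ‖q (m - 1) - z * q m‖ * ρ ^ m ≤
      max (ρ * (‖q (m - 1)‖ * ρ ^ (m - 1))) (‖z‖ * (‖q m‖ * ρ ^ m)) := by
  rw [← max_norm_mul_zpow hρ]
  exact mul_le_mul_of_nonneg_right (norm_sub_le_max _ _) (zpow_nonneg hρ.le m)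

lemma norm_sub_mul_zpow_eq (hρ : 0 < ρ) {m : ℤ}
    (h : ρ * (‖q (m - 1)‖ * ρ ^ (m - 1)) ≠ ‖z‖ * (‖q m‖ * ρ ^ m)) :
    ‖q (m - 1) - z * q m‖ * ρ ^ m =
      max (ρ * (‖q (m - 1)‖ * ρ ^ (m - 1))) (‖z‖ * (‖q m‖ * ρ ^ m)) := by
  rw [← max_norm_mul_zpow hρ, norm_sub_eq_max_of_norm_ne_norm]
  intro hq
  apply h
  rw [mul_mul_zpow_sub_one hρ, hq, norm_mul, mul_assoc]

/-- Multiplying by `X - z` with `‖z‖ ≤ ρ` moves the last dominant index on `‖x‖ = ρ` up by one. -/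
lemma IsLastMax.of_eq_sub_mul (hb : ∀ m, b m = q (m - 1) - z * q m) (hρ : 0 < ρ) (hz : ‖z‖ ≤ ρ)
    {i : ℤ} (h : IsLastMax (fun i => ‖q i‖ * ρ ^ i) i) :
    IsLastMax (fun m => ‖b m‖ * ρ ^ m) (i + 1) := by
  set w := fun i => ‖q i‖ * ρ ^ i
  have hzw (k : ℤ) : ‖z‖ * w k ≤ ρ * w k :=
    mul_le_mul_of_nonneg_right hz (mul_nonneg (norm_nonneg _) (zpow_nonneg hρ.le k))
  have htop : ‖b (i + 1)‖ * ρ ^ (i + 1) = ρ * w i := by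
    have hlt : ‖z‖ * w (i + 1) < ρ * w (i + 1 - 1) := by
      rw [add_sub_cancel_right]
      exact (hzw _).trans_lt (mul_lt_mul_of_pos_left (h.2 _ (lt_add_one i)) hρ)
    rw [hb, norm_sub_mul_zpow_eq hρ hlt.ne', max_eq_left hlt.le, add_sub_cancel_right]
  have hle (m : ℤ) : ‖b m‖ * ρ ^ m ≤ max (ρ * w (m - 1)) (‖z‖ * w m) := by
    rw [hb]; exact norm_sub_mul_zpow_le hρ m
  refine ⟨fun m => ?_, fun m hm => ?_⟩ <;> dsimp only <;> rw [htop]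
  · exact (hle m).trans <| max_le (mul_le_mul_of_nonneg_left (h.1 _) hρ.le)
      ((hzw m).trans (mul_le_mul_of_nonneg_left (h.1 _) hρ.le))
  · exact (hle m).trans_lt <| max_lt (mul_lt_mul_of_pos_left (h.2 _ (by omega)) hρ)
      ((hzw m).trans_lt (mul_lt_mul_of_pos_left (h.2 _ (by omega)) hρ))

/-- Multiplying by `X - z` with `ρ ≤ ‖z‖` keeps the first dominant index on `‖x‖ = ρ`. -/
lemma IsFirstMax.of_eq_sub_mul (hb : ∀ m, b m = q (m - 1) - z * q m) (hρ : 0 < ρ) (hz : ρ ≤ ‖z‖)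
    {j : ℤ} (h : IsFirstMax (fun i => ‖q i‖ * ρ ^ i) j) :
    IsFirstMax (fun m => ‖b m‖ * ρ ^ m) j := by
  set w := fun i => ‖q i‖ * ρ ^ i
  have hz0 : 0 < ‖z‖ := hρ.trans_le hz
  have hρw (k : ℤ) : ρ * w k ≤ ‖z‖ * w k :=
    mul_le_mul_of_nonneg_right hz (mul_nonneg (norm_nonneg _) (zpow_nonneg hρ.le k))
  have hbot : ‖b j‖ * ρ ^ j = ‖z‖ * w j := by
    have hlt : ρ * w (j - 1) < ‖z‖ * w j :=
      (hρw _).trans_lt (mul_lt_mul_of_pos_left (h.2 _ (sub_one_lt j)) hz0)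
    rw [hb, norm_sub_mul_zpow_eq hρ hlt.ne, max_eq_right hlt.le]
  have hle (m : ℤ) : ‖b m‖ * ρ ^ m ≤ max (ρ * w (m - 1)) (‖z‖ * w m) := by
    rw [hb]; exact norm_sub_mul_zpow_le hρ m
  refine ⟨fun m => ?_, fun m hm => ?_⟩ <;> dsimp only <;> rw [hbot]
  · exact (hle m).trans <| max_le ((hρw _).trans (mul_le_mul_of_nonneg_left (h.1 _) hz0.le))
      (mul_le_mul_of_nonneg_left (h.1 m) hz0.le)
  · exact (hle m).trans_lt <| max_lt
      ((hρw _).trans_lt (mul_lt_mul_of_pos_left (h.2 _ (by omega)) hz0))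
      (mul_lt_mul_of_pos_left (h.2 m hm) hz0)

end Weights

section Annulus

variable {L : Type*} [NormedField L] {r s ρ : ℝ} {b : ℤ → L} {z : L}

/-- The coefficient condition making `∑ bᵢ Xⁱ` an analytic function on the closed annulus
`r ≤ ‖x‖ ≤ s`. -/
def ConvergesOnAnnulus (r s : ℝ) (b : ℤ → L) : Prop :=
  Tendsto (fun i => ‖b i‖ * s ^ i) atTop (𝓝 0) ∧ Tendsto (fun i => ‖b i‖ * r ^ i) atBot (𝓝 0)

lemma ConvergesOnAnnulus.tendsto_cofinite (hb : ConvergesOnAnnulus r s b) (hr : 0 < r)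
    (hrρ : r ≤ ρ) (hρs : ρ ≤ s) : Tendsto (fun i => ‖b i‖ * ρ ^ i) cofinite (𝓝 0) := by
  have hnonneg (i : ℤ) : 0 ≤ ‖b i‖ * ρ ^ i :=
    mul_nonneg (norm_nonneg _) (zpow_nonneg (hr.trans_le hrρ).le i)
  rw [Int.cofinite_eq, tendsto_sup]
  refine ⟨squeeze_zero' (.of_forall hnonneg) ?_ hb.2, squeeze_zero' (.of_forall hnonneg) ?_ hb.1⟩
  · filter_upwards [eventually_le_atBot 0] with i hi
    exact mul_le_mul_of_nonneg_left (zpow_le_zpow_left_of_nonpos hr hrρ hi) (norm_nonneg _)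
  · filter_upwards [eventually_ge_atTop 0] with i hi
    exact mul_le_mul_of_nonneg_left (zpow_le_zpow_left₀ hi (hr.le.trans hrρ) hρs) (norm_nonneg _)

lemma ConvergesOnAnnulus.exists_isLastMax_isFirstMax (hb : ConvergesOnAnnulus r s b)
    (hr : 0 < r) (hrs : r ≤ s) (hb0 : ∃ i, b i ≠ 0) :
    (∃ i, IsLastMax (fun i => ‖b i‖ * s ^ i) i) ∧ ∃ j, IsFirstMax (fun i => ‖b i‖ * r ^ i) j := by
  obtain ⟨k, hk⟩ := hb0
  have hpos {ρ : ℝ} (hρ : 0 < ρ) : 0 < ‖b k‖ * ρ ^ k := mul_pos (norm_pos_iff.2 hk) (zpow_pos hρ k)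
  exact ⟨exists_isLastMax (hb.tendsto_cofinite hr hrs le_rfl) ⟨k, hpos (hr.trans_le hrs)⟩,
    exists_isFirstMax (hb.tendsto_cofinite hr le_rfl hrs) ⟨k, hpos hr⟩⟩

/-- When `f = ∑ bᵢ Xⁱ` vanishes at `z`, these are the Laurent coefficients of `f / (X - z)`. -/
noncomputable def divXSub (b : ℤ → L) (z : L) (m : ℤ) : L :=
  ∑' i, (Set.Ioi m).indicator (fun i => b i * z ^ (i - m - 1)) i

lemma mul_zpow_sub_sub_one (hz0 : z ≠ 0) (a : L) (i m : ℤ) :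
    a * z ^ (i - m - 1) = a * z ^ i * z ^ (-m - 1) := by
  rw [mul_assoc, ← zpow_add₀ hz0]; ring_nf

lemma summable_mul_zpow_sub (hz : Summable fun i => b i * z ^ i) (hz0 : z ≠ 0) (m : ℤ) :
    Summable fun i => b i * z ^ (i - m - 1) :=
  (hz.mul_right (z ^ (-m - 1))).congr fun i => (mul_zpow_sub_sub_one hz0 _ i m).symm

lemma tsum_mul_zpow_eq_sub_mul {q : ℤ → L} (hrec : ∀ m, b m = q (m - 1) - z * q m) {x : L}
    (hx : x ≠ 0) (hq : Summable fun i => q i * x ^ i) :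
    ∑' i, b i * x ^ i = (x - z) * ∑' i, q i * x ^ i := by
  have hshift : HasSum (fun i => q (i - 1) * x ^ i) (x * ∑' i, q i * x ^ i) := by
    have he : (fun i => q (i - 1) * x ^ i) =
        (fun k => x * (q k * x ^ k)) ∘ Equiv.subRight (1 : ℤ) := by
      ext i
      rw [Function.comp_apply, Equiv.subRight_apply, mul_left_comm, ← zpow_one_add₀ hx,
        add_sub_cancel]
    rw [he, Equiv.hasSum_iff]
    exact hq.hasSum.mul_left x
  rw [sub_mul, ← hshift.tsum_eq, ← tsum_mul_left,
    ← Summable.tsum_sub hshift.summable (hq.mul_left z)]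
  exact tsum_congr fun i => by rw [hrec]; ring

variable [IsUltrametricDist L]

lemma norm_tsum_indicator_mul_zpow_le (hρ : 0 < ρ) {S : Set ℤ} {m : ℤ} {C : ℝ} (hC : 0 ≤ C)
    (h : ∀ i ∈ S, ‖z‖ ^ (i - m - 1) ≤ ρ ^ (i - m - 1) ∧ ‖b i‖ * ρ ^ i ≤ C) :
    ‖∑' i, S.indicator (fun i => b i * z ^ (i - m - 1)) i‖ * ρ ^ (m + 1) ≤ C := by
  refine norm_tsum_mul_le_of_forall_le (zpow_pos hρ _) hC fun i => ?_
  by_cases hi : i ∈ S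
  · rw [Set.indicator_of_mem hi, norm_mul, norm_zpow, mul_assoc]
    calc ‖b i‖ * (‖z‖ ^ (i - m - 1) * ρ ^ (m + 1))
        ≤ ‖b i‖ * (ρ ^ (i - m - 1) * ρ ^ (m + 1)) := by gcongr; exact (h i hi).1
      _ = ‖b i‖ * ρ ^ i := by rw [← zpow_add₀ hρ.ne']; ring_nf
      _ ≤ C := (h i hi).2
  · rw [Set.indicator_of_notMem hi, norm_zero, zero_mul]
    exact hC

lemma norm_divXSub_mul_zpow_le_of_norm_le (hρ : 0 < ρ) (hz : ‖z‖ ≤ ρ) {m : ℤ} {C : ℝ}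
    (hC : 0 ≤ C) (h : ∀ i, m < i → ‖b i‖ * ρ ^ i ≤ C) : ‖divXSub b z m‖ * ρ ^ (m + 1) ≤ C :=
  norm_tsum_indicator_mul_zpow_le hρ hC fun i hi =>
    ⟨zpow_le_zpow_left₀ (by simp only [Set.mem_Ioi] at hi; omega) (norm_nonneg _) hz, h i hi⟩

variable [CompleteSpace L]

lemma ConvergesOnAnnulus.summable (hb : ConvergesOnAnnulus r s b) (hr : 0 < r) {x : L}
    (hx : r ≤ ‖x‖) (hx' : ‖x‖ ≤ s) : Summable fun i => b i * x ^ i := by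
  rw [NonarchimedeanAddGroup.summable_iff_tendsto_cofinite_zero,
    tendsto_zero_iff_norm_tendsto_zero]
  simpa only [norm_mul, norm_zpow] using hb.tendsto_cofinite hr hx hx'

lemma divXSub_sub_mul_divXSub (hz : Summable fun i => b i * z ^ i) (hz0 : z ≠ 0) (m : ℤ) :
    divXSub b z (m - 1) - z * divXSub b z m = b m := by
  rw [divXSub, divXSub, ← tsum_mul_left, ← Summable.tsum_sub
    ((summable_mul_zpow_sub hz hz0 _).indicator _)
    (((summable_mul_zpow_sub hz hz0 _).indicator _).mul_left z)]
  refine (tsum_congr fun i => ?_).trans (tsum_ite_eq m b)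
  simp only [Set.indicator_apply, Set.mem_Ioi]
  rcases lt_trichotomy i m with h | rfl | h
  · rw [if_neg (by omega), if_neg h.not_gt, if_neg h.ne]; ring
  · rw [if_pos (sub_one_lt i), if_neg (lt_irrefl i), if_pos rfl, show i - (i - 1) - 1 = 0 by ring,
      zpow_zero, mul_one, mul_zero, sub_zero]
  · rw [if_pos (by omega), if_pos h, if_neg h.ne', show i - (m - 1) - 1 = 1 + (i - m - 1) by ring,
      zpow_one_add₀ hz0]
    ring

lemma divXSub_eq_neg_tsum (hz : Summable fun i => b i * z ^ i) (hz0 : z ≠ 0)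
    (hf : ∑' i, b i * z ^ i = 0) (m : ℤ) :
    divXSub b z m = -∑' i, (Set.Iic m).indicator (fun i => b i * z ^ (i - m - 1)) i := by
  have hT := summable_mul_zpow_sub hz hz0 m
  refine eq_neg_of_add_eq_zero_left ?_
  rw [divXSub, ← Summable.tsum_add (hT.indicator _) (hT.indicator _)]
  simp only [← Set.compl_Ioi, Set.indicator_self_add_compl_apply]
  simp_rw [mul_zpow_sub_sub_one hz0]
  rw [tsum_mul_right, hf, zero_mul]

lemma norm_divXSub_mul_zpow_le_of_le_norm (hρ : 0 < ρ) (hz : ρ ≤ ‖z‖)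
    (hsum : Summable fun i => b i * z ^ i) (hf : ∑' i, b i * z ^ i = 0) {m : ℤ} {C : ℝ}
    (hC : 0 ≤ C) (h : ∀ i, i ≤ m → ‖b i‖ * ρ ^ i ≤ C) : ‖divXSub b z m‖ * ρ ^ (m + 1) ≤ C := by
  rw [divXSub_eq_neg_tsum hsum (norm_pos_iff.1 (hρ.trans_le hz)) hf, norm_neg]
  exact norm_tsum_indicator_mul_zpow_le hρ hC fun i hi =>
    ⟨zpow_le_zpow_left_of_nonpos hρ hz (by simp only [Set.mem_Iic] at hi; omega), h i hi⟩

lemma convergesOnAnnulus_divXSub (hb : ConvergesOnAnnulus r s b) (hr : 0 < r) (hz : r ≤ ‖z‖)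
    (hz' : ‖z‖ ≤ s) (hf : ∑' i, b i * z ^ i = 0) : ConvergesOnAnnulus r s (divXSub b z) := by
  have hs : 0 < s := hr.trans_le (hz.trans hz')
  have hnonneg {ρ : ℝ} (hρ : 0 < ρ) (m : ℤ) : 0 ≤ ‖divXSub b z m‖ * ρ ^ (m + 1) :=
    mul_nonneg (norm_nonneg _) (zpow_nonneg hρ.le _)
  have hshift {ρ : ℝ} (hρ : 0 < ρ) {l : Filter ℤ}
      (h : Tendsto (fun m => ‖divXSub b z m‖ * ρ ^ (m + 1)) l (𝓝 0)) :
      Tendsto (fun m => ‖divXSub b z m‖ * ρ ^ m) l (𝓝 0) := by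
    simpa [zpow_add_one₀ hρ.ne', mul_assoc, hρ.ne'] using h.mul_const ρ⁻¹
  refine ⟨hshift hs ?_, hshift hr ?_⟩
  · exact tendsto_atTop_zero_of_tail_bound hb.1 (hnonneg hs) fun m C hC h =>
      norm_divXSub_mul_zpow_le_of_norm_le hs hz' hC fun i hi => h i hi.le
  · exact tendsto_atTop_zero_of_tail_bound (α := ℤᵒᵈ) hb.2 (hnonneg hr) fun m C hC h =>
      norm_divXSub_mul_zpow_le_of_le_norm hr hz (hb.summable hr hz hz') hf hC h

theorem ConvergesOnAnnulus.encard_zeros_le (hb : ConvergesOnAnnulus r s b) (hr : 0 < r)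
    (hrs : r ≤ s) {i₀ j₀ : ℤ} (hi : IsLastMax (fun i => ‖b i‖ * s ^ i) i₀)
    (hj : IsFirstMax (fun i => ‖b i‖ * r ^ i) j₀) :
    {x : L | r ≤ ‖x‖ ∧ ‖x‖ ≤ s ∧ ∑' i, b i * x ^ i = 0}.encard ≤ (i₀ - j₀).toNat := by
  generalize hn : (i₀ - j₀).toNat = n
  induction n generalizing b i₀ j₀ with
  | zero =>
    obtain rfl : i₀ = j₀ := by have := hj.le_of_isLastMax hr hrs hi; omega
    rw [Nat.cast_zero, nonpos_iff_eq_zero, Set.encard_eq_zero, Set.eq_empty_iff_forall_notMem]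
    rintro x ⟨hx, hx', hx0⟩
    exact tsum_mul_zpow_ne_zero hr hi hj hx hx' (hb.summable hr hx hx') hx0
  | succ n ih =>
    rcases Set.eq_empty_or_nonempty {x : L | r ≤ ‖x‖ ∧ ‖x‖ ≤ s ∧ ∑' i, b i * x ^ i = 0} with
      he | ⟨z, hz, hz', hz0⟩
    · simp [he]
    have hs : 0 < s := hr.trans_le hrs
    set q := divXSub b z
    have hq := convergesOnAnnulus_divXSub hb hr hz hz' hz0
    have hrec (m : ℤ) : b m = q (m - 1) - z * q m :=
      (divXSub_sub_mul_divXSub (hb.summable hr hz hz') (norm_pos_iff.1 (hr.trans_le hz)) m).symm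
    have hq0 : ∃ k, q k ≠ 0 := by
      by_contra! h
      exact ne_zero_of_isLastMax hs hi (by rw [hrec, h, h, mul_zero, sub_zero])
    obtain ⟨⟨i', hi'⟩, j', hj'⟩ := hq.exists_isLastMax_isFirstMax hr hrs hq0
    obtain rfl := hi.unique (hi'.of_eq_sub_mul hrec hs hz')
    obtain rfl := hj.unique (hj'.of_eq_sub_mul hrec hr hz)
    have hsub : {x : L | r ≤ ‖x‖ ∧ ‖x‖ ≤ s ∧ ∑' i, b i * x ^ i = 0} ⊆
        insert z {x : L | r ≤ ‖x‖ ∧ ‖x‖ ≤ s ∧ ∑' i, q i * x ^ i = 0} := by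
      rintro x ⟨hx, hx', hx0⟩
      refine or_iff_not_imp_left.2 fun hxz => ⟨hx, hx', ?_⟩
      rw [tsum_mul_zpow_eq_sub_mul hrec (norm_pos_iff.1 (hr.trans_le hx))
        (hq.summable hr hx hx')] at hx0
      exact (mul_eq_zero.1 hx0).resolve_left (sub_ne_zero.2 hxz)
    calc _ ≤ _ := Set.encard_le_encard hsub
      _ ≤ _ := Set.encard_insert_le _ _
      _ ≤ n + 1 := by gcongr; exact ih hq hi' hj' (by omega)
      _ = (n + 1 : ℕ) := by push_cast; rfl

theorem ConvergesOnAnnulus.finite_zeros (hb : ConvergesOnAnnulus r s b) (hr : 0 < r)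
    (hrs : r ≤ s) (hb0 : ∃ i, b i ≠ 0) :
    {x : L | r ≤ ‖x‖ ∧ ‖x‖ ≤ s ∧ ∑' i, b i * x ^ i = 0}.Finite := by
  obtain ⟨⟨i₀, hi⟩, j₀, hj⟩ := hb.exists_isLastMax_isFirstMax hr hrs hb0
  exact Set.finite_of_encard_le_coe (hb.encard_zeros_le hr hrs hi hj)

end Annulus

section Valuation

variable {R : Type*} [CommRing R] {L : Type*} [NormedField L] (φ : R →+* L)

lemma norm_map_le_pow_of_pow_dvd (hφ : ∀ r, ‖φ r‖ ≤ 1) {π r : R} {n : ℕ} (h : π ^ n ∣ r) :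
    ‖φ r‖ ≤ ‖φ π‖ ^ n := by
  obtain ⟨c, rfl⟩ := h
  rw [map_mul, map_pow, norm_mul, norm_pow]
  exact mul_le_of_le_one_right (by positivity) (hφ c)

lemma tendsto_norm_map_div_pow {ι : Type*} {l : Filter ι} (hφ : ∀ r, ‖φ r‖ ≤ 1) {π : R}
    (hπ : ‖φ π‖ < 1) {a : ι → R} {k : ι → ℕ} (h : ∀ n, ∀ᶠ i in l, π ^ (k i + n) ∣ a i) :
    Tendsto (fun i => ‖φ (a i)‖ / ‖φ π‖ ^ k i) l (𝓝 0) := by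
  refine tendsto_order.2
    ⟨fun c hc => .of_forall fun i => hc.trans_le (by positivity), fun ε hε => ?_⟩
  obtain ⟨n, hn⟩ := exists_pow_lt_of_lt_one hε hπ
  filter_upwards [h n] with i hi
  refine (div_le_of_le_mul₀ (by positivity) (by positivity) ?_).trans_lt hn
  rw [← pow_add, add_comm]
  exact norm_map_le_pow_of_pow_dvd φ hφ hi

lemma injective_of_map_irreducible_ne_zero [IsDomain R] [IsDiscreteValuationRing R] {π : R}
    (hπ : Irreducible π) (hφπ : φ π ≠ 0) : Function.Injective φ := by
  refine (injective_iff_map_eq_zero φ).2 fun r hr => by_contra fun hr0 => ?_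
  obtain ⟨n, u, rfl⟩ := IsDiscreteValuationRing.eq_unit_mul_pow_irreducible hr0 hπ
  rw [map_mul, map_pow] at hr
  exact mul_ne_zero (u.isUnit.map φ).ne_zero (pow_ne_zero _ hφπ) hr

end Valuation

end AnnulusZeros

open AnnulusZeros

theorem finitely_many_zeros_on_closed_annulus_general
    (R : Type*) [CommRing R] [IsDomain R] [IsDiscreteValuationRing R]
    (π : R) (hπ : Irreducible π)
    (e : ℕ)
    (a : ℤ → R) (hne : ∃ i : ℤ, a i ≠ 0)
    -- the coefficients tend to 0 π-adically (restrictedness)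
    (hd1 : ∀ n : ℕ, {i : ℤ | ¬ π ^ n ∣ a i}.Finite)
    (hd2 : ∀ n : ℕ, {i : ℕ | ¬ π ^ (e * i + n) ∣ a (-(i : ℤ))}.Finite)
    -- a complete ultrametric algebraically closed valued extension field
    (L : Type*) [NormedField L] [CompleteSpace L] [IsUltrametricDist L]
    (φ : R →+* L)
    (hφ : ∀ r : R, ‖φ r‖ ≤ 1) (hφπ : ‖φ π‖ < 1) (hφπ0 : φ π ≠ 0) :
    {x : L | ‖φ π‖ ^ e ≤ ‖x‖ ∧ ‖x‖ ≤ 1 ∧ ∑' i : ℤ, φ (a i) * x ^ i = 0}.Finite := by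
  have hc : 0 < ‖φ π‖ := norm_pos_iff.2 hφπ0
  refine ConvergesOnAnnulus.finite_zeros (b := fun i => φ (a i)) ⟨?_, ?_⟩ (pow_pos hc e)
    (pow_le_one₀ hc.le (hφ π)) ?_
  · have h := tendsto_norm_map_div_pow φ hφ hφπ (l := cofinite) (a := a)
      (k := fun _ => 0) fun n => eventually_cofinite.2 (by simpa using hd1 n)
    simpa using h.mono_left atTop_le_cofinite
  · have h := tendsto_norm_map_div_pow φ hφ hφπ (a := fun k : ℕ => a (-k)) (k := (e * ·))
      fun n => eventually_cofinite.2 (hd2 n)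
    rw [Nat.cofinite_eq_atTop] at h
    rw [← tendsto_comp_neg_atTop_iff, ← Nat.map_cast_int_atTop, tendsto_map'_iff]
    simpa [Function.comp_def, div_eq_mul_inv, pow_mul] using h
  · obtain ⟨i, hi⟩ := hne
    exact ⟨i, (map_ne_zero_iff φ (injective_of_map_irreducible_ne_zero φ hπ hφπ0)).2 hi⟩

/-- a nonzero bounded analytic function on a closed annulus has only finitely
many zeros.  Let `f = Σ_{i∈ℤ} a_i X^i` be a nonzero element of `R{X,Y}/(XY − π^e)` written as
a Laurent series (so `π^{ei} ∣ a_{−i}` and the coefficients tend to 0 π-adically), and let `L`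
be a complete ultrametric valued extension field (e.g. an algebraic closure of `K`).  Then the
set of zeros of `f` in the annulus `|π|^e ≤ |x| ≤ 1` of `L` is finite. -/
theorem finitely_many_zeros_on_closed_annulus
    (R : Type*) [CommRing R] [IsDomain R] [IsDiscreteValuationRing R]
    (π : R) (hπ : Irreducible π) [IsAdicComplete (Ideal.span {π}) R]
    (e : ℕ) (he : 0 < e)
    (a : ℤ → R) (hne : ∃ i : ℤ, a i ≠ 0)
    -- the Laurent series condition `ord_π(a_{−i}) ≥ e·i`
    (hadm : ∀ i : ℕ, π ^ (e * i) ∣ a (-(i : ℤ)))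
    -- the coefficients tend to 0 π-adically (restrictedness)
    (hd1 : ∀ n : ℕ, {i : ℤ | ¬ π ^ n ∣ a i}.Finite)
    (hd2 : ∀ n : ℕ, {i : ℕ | ¬ π ^ (e * i + n) ∣ a (-(i : ℤ))}.Finite)
    -- a complete ultrametric algebraically closed valued extension field
    (L : Type*) [NormedField L] [CompleteSpace L] [IsUltrametricDist L] [IsAlgClosed L]
    (φ : R →+* L)
    (hφ : ∀ r : R, ‖φ r‖ ≤ 1) (hφπ : ‖φ π‖ < 1) (hφπ0 : φ π ≠ 0)
    -- the series converges on the closed annulus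
    (hsum : ∀ x : L, ‖φ π‖ ^ e ≤ ‖x‖ → ‖x‖ ≤ 1 →
      Summable fun i : ℤ => φ (a i) * x ^ i) :
    {x : L | ‖φ π‖ ^ e ≤ ‖x‖ ∧ ‖x‖ ≤ 1 ∧ ∑' i : ℤ, φ (a i) * x ^ i = 0}.Finite :=
  finitely_many_zeros_on_closed_annulus_general R π hπ e a hne hd1 hd2 L φ hφ hφπ hφπ0
end

section
/- Multiplicativity of the boundary valuation: let R be a complete DVR with uniformizer π, e > 0, and A = R{X,Y}/(XY − π^e). For f = Σ_{i∈ℤ} a_i X^i ∈ A nonzero define η_X(f) = min_i ord_π(a_i) and v_X(f) = min{i : ord_π(a_i) = η_X(f)}. Then for all nonzero f, g ∈ A: η_X(fg) = η_X(f) + η_X(g) and v_X(fg) = v_X(f) + v_X(g); i.e. f ↦ (η_X(f), v_X(f)) ∈ ℤ≥0 × ℤ (lexicographically ordered) is a rank-2 valuation on A. -/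
/-!
Every term `a_j b_{i-j}` of `c_i` is divisible by `π^(η₁+η₂)`, and by `π^(η₁+η₂+1)` as soon as
`j < v₁` or `i - j < v₂`. Hence all of `c` is divisible by `π^(η₁+η₂)`, all `c_i` with
`i < v₁ + v₂` by `π^(η₁+η₂+1)`, and `c_{v₁+v₂} ≡ a_{v₁} b_{v₂}` modulo `π^(η₁+η₂+1)`; the latter
product is not divisible by `π^(η₁+η₂+1)` because `π` is prime (Gauss's lemma). Since the ideals
`(π^n)` are closed, termwise divisibility passes to the convergent sums.
-/

noncomputable section

/-- `EtaV π a η v` expresses that for the Laurent series with coefficients `a : ℤ → R` one has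
`η_X(a) = η` and `v_X(a) = v`: all coefficients are divisible by `π^η`, the coefficient `a_v`
is not divisible by `π^{η+1}`, and all coefficients of index `< v` are divisible by
`π^{η+1}`. -/
def EtaV {R : Type*} [CommRing R] (π : R) (a : ℤ → R) (η : ℕ) (v : ℤ) : Prop :=
  (∀ i : ℤ, π ^ η ∣ a i) ∧ ¬ π ^ (η + 1) ∣ a v ∧ ∀ i : ℤ, i < v → π ^ (η + 1) ∣ a i

section ClosedIdeal

variable {R ι : Type*} [CommRing R] [TopologicalSpace R] {f : ι → R} {s d : R}

theorem HasSum.dvd_of_forall_dvd (hd : IsClosed ((Ideal.span {d} : Ideal R) : Set R))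
    (hf : HasSum f s) (h : ∀ i, d ∣ f i) : d ∣ s :=
  Ideal.mem_span_singleton.1 <| hd.mem_of_tendsto hf <| .of_forall fun _ =>
    Ideal.sum_mem _ fun i _ => Ideal.mem_span_singleton.2 (h i)

theorem HasSum.dvd_sub_of_forall_ne_dvd [IsTopologicalAddGroup R] [DecidableEq ι]
    (hd : IsClosed ((Ideal.span {d} : Ideal R) : Set R)) (hf : HasSum f s) (i₀ : ι)
    (h : ∀ i, i ≠ i₀ → d ∣ f i) : d ∣ s - f i₀ := by
  have hupd : HasSum (Function.update f i₀ 0) (s - f i₀) := by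
    simpa [sub_eq_neg_add] using hf.update i₀ 0
  refine hupd.dvd_of_forall_dvd hd fun i => ?_
  rcases eq_or_ne i i₀ with rfl | hi
  · simp
  · simpa [Function.update_of_ne hi] using h i hi

end ClosedIdeal

namespace EtaV

variable {R : Type*} [CommRing R] {π : R} {a b : ℤ → R} {η₁ η₂ : ℕ} {v₁ v₂ : ℤ}

theorem pow_add_dvd_mul (ha : EtaV π a η₁ v₁) (hb : EtaV π b η₂ v₂) (j k : ℤ) :
    π ^ (η₁ + η₂) ∣ a j * b k :=
  pow_add π η₁ η₂ ▸ mul_dvd_mul (ha.1 j) (hb.1 k)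

theorem pow_add_succ_dvd_mul (ha : EtaV π a η₁ v₁) (hb : EtaV π b η₂ v₂) {j k : ℤ}
    (h : j < v₁ ∨ k < v₂) : π ^ (η₁ + η₂ + 1) ∣ a j * b k := by
  rcases h with hj | hk
  · rw [add_right_comm, pow_add]
    exact mul_dvd_mul (ha.2.2 j hj) (hb.1 k)
  · rw [add_assoc, pow_add]
    exact mul_dvd_mul (ha.1 j) (hb.2.2 k hk)

theorem not_pow_add_succ_dvd_mul [IsDomain R] (hπ : Prime π) (ha : EtaV π a η₁ v₁)
    (hb : EtaV π b η₂ v₂) :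
    ¬ π ^ (η₁ + η₂ + 1) ∣ a v₁ * b v₂ := fun h =>
  (succ_dvd_or_succ_dvd_of_succ_sum_dvd_mul hπ (ha.1 v₁) (hb.1 v₂) h).elim ha.2.1 hb.2.1

end EtaV

theorem boundary_valuation_multiplicative_general
    (R : Type*) [CommRing R] [IsDomain R] [IsDiscreteValuationRing R]
    [TopologicalSpace R] [IsTopologicalRing R]
    (π : R) (hπ : Irreducible π)
    -- ideals of `R` are closed (as holds for the π-adic topology on a complete DVR)
    (hclosed : ∀ n : ℕ, IsClosed ((Ideal.span {π ^ n} : Ideal R) : Set R))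
    (a b c : ℤ → R)
    -- `c` is the Laurent series of the product
    (hmul : ∀ i : ℤ, HasSum (fun j : ℤ => a j * b (i - j)) (c i))
    (η₁ η₂ : ℕ) (v₁ v₂ : ℤ)
    (hab : EtaV π a η₁ v₁) (hbb : EtaV π b η₂ v₂) :
    EtaV π c (η₁ + η₂) (v₁ + v₂) := by
  refine ⟨fun i => ?_, fun hdvd => ?_, fun i hi => ?_⟩
  · exact (hmul i).dvd_of_forall_dvd (hclosed _) fun j => hab.pow_add_dvd_mul hbb _ _
  · have hrest : π ^ (η₁ + η₂ + 1) ∣ c (v₁ + v₂) - a v₁ * b (v₁ + v₂ - v₁) :=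
      (hmul _).dvd_sub_of_forall_ne_dvd (hclosed _) v₁ fun j hj =>
        hab.pow_add_succ_dvd_mul hbb (by omega)
    rw [add_sub_cancel_left] at hrest
    exact hab.not_pow_add_succ_dvd_mul hπ.prime hbb ((dvd_sub_right hdvd).1 hrest)
  · exact (hmul i).dvd_of_forall_dvd (hclosed _) fun j => hab.pow_add_succ_dvd_mul hbb (by omega)

/-- multiplicativity of the boundary valuation on the closed annulus ring.  If
`f, g` are nonzero elements of `R{X,Y}/(XY − π^e)` written as Laurent series with coefficients
`a, b : ℤ → R`, with product `c` (`c_i = Σ_j a_j·b_{i−j}`, a convergent sum in the complete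
DVR `R`), then `η_X(fg) = η_X(f) + η_X(g)` and `v_X(fg) = v_X(f) + v_X(g)`; i.e.
`f ↦ (η_X(f), v_X(f))` is a rank-2 valuation. -/
theorem boundary_valuation_multiplicative
    (R : Type*) [CommRing R] [IsDomain R] [IsDiscreteValuationRing R]
    [TopologicalSpace R] [IsTopologicalRing R] [T2Space R]
    (π : R) (hπ : Irreducible π) (e : ℕ) (he : 0 < e)
    -- ideals of `R` are closed (as holds for the π-adic topology on a complete DVR)
    (hclosed : ∀ n : ℕ, IsClosed ((Ideal.span {π ^ n} : Ideal R) : Set R))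
    (a b c : ℤ → R)
    -- Laurent series conditions `ord_π(a_{−i}) ≥ e·i`
    (hadma : ∀ i : ℕ, π ^ (e * i) ∣ a (-(i : ℤ)))
    (hadmb : ∀ i : ℕ, π ^ (e * i) ∣ b (-(i : ℤ)))
    -- coefficients tend to 0 π-adically
    (hda : ∀ n : ℕ, {i : ℤ | ¬ π ^ n ∣ a i}.Finite)
    (hdb : ∀ n : ℕ, {i : ℤ | ¬ π ^ n ∣ b i}.Finite)
    -- `c` is the Laurent series of the product
    (hmul : ∀ i : ℤ, HasSum (fun j : ℤ => a j * b (i - j)) (c i))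
    (η₁ η₂ : ℕ) (v₁ v₂ : ℤ)
    (hab : EtaV π a η₁ v₁) (hbb : EtaV π b η₂ v₂) :
    EtaV π c (η₁ + η₂) (v₁ + v₂) :=
  boundary_valuation_multiplicative_general R π hπ hclosed a b c hmul η₁ η₂ v₁ v₂ hab hbb
end
end
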